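/- arXiv:1909.12132 — 10 statements merged into one kernel-verified Lean document; each statement's English description precedes it below -/
import Mathlib

section
/- The map $f : [\mathbb N]^k \to [\mathbb N]^{2k}$ sending a strictly increasing tuple $(n_1,\ldots,n_k)$ to $(2n_1, 2n_1+1, 2n_2, 2n_2+1, \ldots, 2n_k, 2n_k+1)$ satisfies $d_{\mathbb K}(f(\overline n), f(\overline m)) = 2\, d_{\mathbb K}(\overline n, \overline m)$ for all $\overline n, \overline m \in [\mathbb N]^k$; i.e., $f$ is an isometry from $([\mathbb N]^k, d_{\mathbb K})$ to $([\mathbb N]^{2k}, \tfrac12 d_{\mathbb K})$. -/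
/-- Kalton's interlaced distance on finite subsets of `ℕ`. -/
noncomputable def dK (A B : Finset ℕ) : ℕ :=
  sSup {d : ℕ | ∃ a b : ℕ,
    d = (((A ∩ Finset.Icc a b).card : ℤ) - ((B ∩ Finset.Icc a b).card : ℤ)).natAbs}

/-- The doubling map `(n₁,…,n_k) ↦ (2n₁, 2n₁+1, …, 2n_k, 2n_k+1)`, viewed on
`k`-element subsets of `ℕ`. -/
def doubleMap (A : Finset ℕ) : Finset ℕ := A.biUnion fun n => {2 * n, 2 * n + 1}

lemma dK_bddAbove (A B : Finset ℕ) :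
    BddAbove {d : ℕ | ∃ a b : ℕ,
      d = (((A ∩ Finset.Icc a b).card : ℤ) - ((B ∩ Finset.Icc a b).card : ℤ)).natAbs} := by
  refine ⟨A.card + B.card, fun d hd => ?_⟩
  obtain ⟨a, b, rfl⟩ := hd
  have h1 : (A ∩ Finset.Icc a b).card ≤ A.card := Finset.card_le_card Finset.inter_subset_left
  have h2 : (B ∩ Finset.Icc a b).card ≤ B.card := Finset.card_le_card Finset.inter_subset_left
  omega

lemma abs_le_dK (A B : Finset ℕ) (a b : ℕ) :
    (((A ∩ Finset.Icc a b).card : ℤ) - ((B ∩ Finset.Icc a b).card : ℤ)).natAbs ≤ dK A B :=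
  le_csSup (dK_bddAbove A B) ⟨a, b, rfl⟩

lemma doubleMap_inter_card (A : Finset ℕ) (a b : ℕ) :
    (doubleMap A ∩ Finset.Icc a b).card
      = (A.filter fun n => 2*n ∈ Finset.Icc a b).card
      + (A.filter fun n => 2*n+1 ∈ Finset.Icc a b).card := by
  rw [doubleMap, Finset.biUnion_inter, Finset.card_biUnion, Finset.card_filter,
    Finset.card_filter, ← Finset.sum_add_distrib]
  · refine Finset.sum_congr rfl fun n _ => ?_
    have h : (({2*n, 2*n+1} : Finset ℕ) ∩ Finset.Icc a b)
        = ({2*n, 2*n+1} : Finset ℕ).filter (· ∈ Finset.Icc a b) := by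
      rw [Finset.filter_mem_eq_inter]
    rw [h, Finset.card_filter, Finset.sum_pair (by omega)]
  · intro x hx y hy hxy
    simp only [Finset.disjoint_left, Finset.mem_inter, Finset.mem_insert, Finset.mem_singleton]
    rintro z ⟨hz, _⟩ ⟨hz', _⟩
    omega

/-- The map `(n₁,…,n_k) ↦ (2n₁, 2n₁+1, …, 2n_k, 2n_k+1)` doubles Kalton's interlaced
distance, i.e. it is an isometry from `([ℕ]^k, d_K)` into `([ℕ]^{2k}, ½ d_K)`. -/
theorem dK_doubleMap (k : ℕ) (A B : Finset ℕ) (hA : A.card = k) (hB : B.card = k) :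
    dK (doubleMap A) (doubleMap B) = 2 * dK A B := by
  apply le_antisymm
  · rw [dK]
    have hne : Set.Nonempty {d : ℕ | ∃ a b : ℕ,
        d = (((doubleMap A ∩ Finset.Icc a b).card : ℤ)
          - ((doubleMap B ∩ Finset.Icc a b).card : ℤ)).natAbs} := ⟨_, 1, 0, rfl⟩
    apply csSup_le hne
    rintro d ⟨a, b, rfl⟩
    rw [doubleMap_inter_card, doubleMap_inter_card]
    have heA : A.filter (fun n => 2*n ∈ Finset.Icc a b) = A ∩ Finset.Icc ((a+1)/2) (b/2) := by
      ext n; simp only [Finset.mem_filter, Finset.mem_inter, Finset.mem_Icc]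
      constructor <;> rintro ⟨h, h'⟩ <;> exact ⟨h, by omega⟩
    have heB : B.filter (fun n => 2*n ∈ Finset.Icc a b) = B ∩ Finset.Icc ((a+1)/2) (b/2) := by
      ext n; simp only [Finset.mem_filter, Finset.mem_inter, Finset.mem_Icc]
      constructor <;> rintro ⟨h, h'⟩ <;> exact ⟨h, by omega⟩
    have h1 := abs_le_dK A B ((a+1)/2) (b/2)
    rw [← heA, ← heB] at h1
    rcases Nat.eq_zero_or_pos b with hb | hb
    · subst hb
      have hoA : A.filter (fun n => 2*n+1 ∈ Finset.Icc a 0) = ∅ := by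
        apply Finset.filter_false_of_mem
        intro n _; simp only [Finset.mem_Icc]; omega
      have hoB : B.filter (fun n => 2*n+1 ∈ Finset.Icc a 0) = ∅ := by
        apply Finset.filter_false_of_mem
        intro n _; simp only [Finset.mem_Icc]; omega
      rw [hoA, hoB]
      simp only [Finset.card_empty]
      omega
    · have hoA : A.filter (fun n => 2*n+1 ∈ Finset.Icc a b) = A ∩ Finset.Icc (a/2) ((b-1)/2) := by
        ext n; simp only [Finset.mem_filter, Finset.mem_inter, Finset.mem_Icc]
        constructor <;> rintro ⟨h, h'⟩ <;> exact ⟨h, by omega⟩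
      have hoB : B.filter (fun n => 2*n+1 ∈ Finset.Icc a b) = B ∩ Finset.Icc (a/2) ((b-1)/2) := by
        ext n; simp only [Finset.mem_filter, Finset.mem_inter, Finset.mem_Icc]
        constructor <;> rintro ⟨h, h'⟩ <;> exact ⟨h, by omega⟩
      have h2 := abs_le_dK A B (a/2) ((b-1)/2)
      rw [← hoA, ← hoB] at h2
      omega
  · have hmem : dK A B ∈ {d : ℕ | ∃ a b : ℕ,
        d = (((A ∩ Finset.Icc a b).card : ℤ) - ((B ∩ Finset.Icc a b).card : ℤ)).natAbs} :=
      Nat.sSup_mem ⟨_, 1, 0, rfl⟩ (dK_bddAbove A B)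
    obtain ⟨a, b, hab⟩ := hmem
    have keyA : (doubleMap A ∩ Finset.Icc (2*a) (2*b+1)).card = 2 * (A ∩ Finset.Icc a b).card := by
      rw [doubleMap_inter_card]
      have h1 : A.filter (fun n => 2*n ∈ Finset.Icc (2*a) (2*b+1)) = A ∩ Finset.Icc a b := by
        ext n; simp only [Finset.mem_filter, Finset.mem_inter, Finset.mem_Icc]
        constructor <;> rintro ⟨h, h'⟩ <;> exact ⟨h, by omega⟩
      have h2 : A.filter (fun n => 2*n+1 ∈ Finset.Icc (2*a) (2*b+1)) = A ∩ Finset.Icc a b := by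
        ext n; simp only [Finset.mem_filter, Finset.mem_inter, Finset.mem_Icc]
        constructor <;> rintro ⟨h, h'⟩ <;> exact ⟨h, by omega⟩
      rw [h1, h2]; ring
    have keyB : (doubleMap B ∩ Finset.Icc (2*a) (2*b+1)).card = 2 * (B ∩ Finset.Icc a b).card := by
      rw [doubleMap_inter_card]
      have h1 : B.filter (fun n => 2*n ∈ Finset.Icc (2*a) (2*b+1)) = B ∩ Finset.Icc a b := by
        ext n; simp only [Finset.mem_filter, Finset.mem_inter, Finset.mem_Icc]
        constructor <;> rintro ⟨h, h'⟩ <;> exact ⟨h, by omega⟩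
      have h2 : B.filter (fun n => 2*n+1 ∈ Finset.Icc (2*a) (2*b+1)) = B ∩ Finset.Icc a b := by
        ext n; simp only [Finset.mem_filter, Finset.mem_inter, Finset.mem_Icc]
        constructor <;> rintro ⟨h, h'⟩ <;> exact ⟨h, by omega⟩
      rw [h1, h2]; ring
    have h := abs_le_dK (doubleMap A) (doubleMap B) (2*a) (2*b+1)
    rw [keyA, keyB] at h
    omega
end

section
/- Let $(s_n)$ be the summing basis of $c_0$, i.e., $s_n = \sum_{i=1}^n e_i$ where $(e_i)$ is the canonical basis. Define $f_k : [\mathbb N]^{\le k} \to c_0$ by $f_k(n_1,\ldots,n_j) = \sum_{i=1}^j s_{n_i}$. Then for all $\overline n, \overline m \in [\mathbb N]^{\le k}$, $\tfrac12 d_{\mathbb K}(\overline n, \overline m) \le \|f_k(\overline n) - f_k(\overline m)\|_\infty \le d_{\mathbb K}(\overline n, \overline m)$. -/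
/-- The `i`-th coordinate of `f_k(A) = ∑_{n ∈ A} s_n ∈ c₀`, where `s_n = e_0 + ⋯ + e_n`
is the summing basis: this coordinate equals `#{n ∈ A : i ≤ n}`. -/
noncomputable def fval (A : Finset ℕ) (i : ℕ) : ℝ := ((A.filter fun n => i ≤ n).card : ℝ)

open Finset

lemma card_filter_le_eq_card_inter_Icc_add (A : Finset ℕ) {a b : ℕ} (hab : a ≤ b + 1) :
    #(A.filter (a ≤ ·)) = #(A ∩ Icc a b) + #(A.filter (b + 1 ≤ ·)) := by
  rw [← card_filter_add_card_filter_not (s := A.filter (a ≤ ·)) (p := (· ≤ b))]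
  congr 2 <;> ext n <;> simp only [mem_filter, mem_inter, mem_Icc] <;> grind

lemma card_inter_Icc_eq_fval_sub (A : Finset ℕ) {a b : ℕ} (hab : a ≤ b + 1) :
    (#(A ∩ Icc a b) : ℝ) = fval A a - fval A (b + 1) := by
  rw [fval, fval, card_filter_le_eq_card_inter_Icc_add A hab]
  push_cast
  ring

lemma fval_eq_zero_of_forall_lt {A : Finset ℕ} {i : ℕ} (h : ∀ n ∈ A, n < i) : fval A i = 0 := by
  rw [fval, Nat.cast_eq_zero, card_eq_zero, filter_eq_empty_iff]
  exact fun n hn => not_le.mpr (h n hn)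

lemma fval_le_card (A : Finset ℕ) (i : ℕ) : fval A i ≤ #A :=
  Nat.cast_le.mpr (card_filter_le A _)

lemma bddAbove_range_abs_fval_sub (A B : Finset ℕ) :
    BddAbove (Set.range fun i => |fval A i - fval B i|) := by
  refine ⟨#A + #B, ?_⟩
  rintro _ ⟨i, rfl⟩
  have hA : 0 ≤ fval A i := Nat.cast_nonneg _
  have hB : 0 ≤ fval B i := Nat.cast_nonneg _
  rw [abs_le]
  constructor <;> linarith [fval_le_card A i, fval_le_card B i]

lemma bddAbove_dK_set (A B : Finset ℕ) :
    BddAbove {d : ℕ | ∃ a b : ℕ,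
      d = ((#(A ∩ Icc a b) : ℤ) - (#(B ∩ Icc a b) : ℤ)).natAbs} := by
  refine ⟨#A + #B, ?_⟩
  rintro _ ⟨a, b, rfl⟩
  have hA := card_le_card (inter_subset_left (s₁ := A) (s₂ := Icc a b))
  have hB := card_le_card (inter_subset_left (s₁ := B) (s₂ := Icc a b))
  omega

lemma abs_card_inter_Icc_sub_le_dK (A B : Finset ℕ) (a b : ℕ) :
    |(#(A ∩ Icc a b) : ℝ) - #(B ∩ Icc a b)| ≤ dK A B := by
  have h : ((#(A ∩ Icc a b) : ℤ) - #(B ∩ Icc a b)).natAbs ≤ dK A B :=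
    le_csSup (bddAbove_dK_set A B) (by exact ⟨a, b, rfl⟩)
  have h' : (((#(A ∩ Icc a b) : ℤ) - #(B ∩ Icc a b)).natAbs : ℝ) ≤ dK A B := by exact_mod_cast h
  simpa [Nat.cast_natAbs] using h'

lemma exists_dK_eq_abs_card_inter_Icc_sub (A B : Finset ℕ) :
    ∃ a b : ℕ, (dK A B : ℝ) = |(#(A ∩ Icc a b) : ℝ) - #(B ∩ Icc a b)| := by
  obtain ⟨a, b, h⟩ := Nat.sSup_mem (by exact ⟨_, 0, 0, rfl⟩) (bddAbove_dK_set A B)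
  refine ⟨a, b, ?_⟩
  rw [← dK] at h
  rw [h, Nat.cast_natAbs]
  push_cast
  rfl

lemma abs_fval_sub_le_dK (A B : Finset ℕ) (i : ℕ) : |fval A i - fval B i| ≤ dK A B := by
  set b := max i ((A ∪ B).sup id)
  have hlt : ∀ n ∈ A ∪ B, n < b + 1 := fun n hn =>
    Nat.lt_succ_of_le ((le_sup (f := id) hn).trans (le_max_right _ _))
  have hi : i ≤ b + 1 := (le_max_left _ _).trans (Nat.le_succ b)
  have hA := card_inter_Icc_eq_fval_sub A hi
  have hB := card_inter_Icc_eq_fval_sub B hi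
  rw [fval_eq_zero_of_forall_lt fun n hn => hlt n (mem_union_left B hn), sub_zero] at hA
  rw [fval_eq_zero_of_forall_lt fun n hn => hlt n (mem_union_right A hn), sub_zero] at hB
  rw [← hA, ← hB]
  exact abs_card_inter_Icc_sub_le_dK A B i b

lemma exists_dK_le_abs_fval_sub_add (A B : Finset ℕ) :
    ∃ i j : ℕ, (dK A B : ℝ) ≤ |fval A i - fval B i| + |fval A j - fval B j| := by
  obtain ⟨a, b, hd⟩ := exists_dK_eq_abs_card_inter_Icc_sub A B
  by_cases hab : a ≤ b
  · refine ⟨a, b + 1, ?_⟩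
    rw [hd, card_inter_Icc_eq_fval_sub A (by omega), card_inter_Icc_eq_fval_sub B (by omega)]
    calc |fval A a - fval A (b + 1) - (fval B a - fval B (b + 1))|
        = |(fval A a - fval B a) - (fval A (b + 1) - fval B (b + 1))| := by ring_nf
      _ ≤ _ := abs_sub _ _
  · refine ⟨0, 0, ?_⟩
    rw [hd, Icc_eq_empty hab]
    simp only [inter_empty, card_empty, Nat.cast_zero, sub_zero, abs_zero]
    positivity

theorem summing_basis_embedding_general (A B : Finset ℕ) :
    (dK A B : ℝ) / 2 ≤ (⨆ i : ℕ, |fval A i - fval B i|) ∧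
      (⨆ i : ℕ, |fval A i - fval B i|) ≤ (dK A B : ℝ) := by
  refine ⟨?_, ciSup_le (abs_fval_sub_le_dK A B)⟩
  have hbdd := bddAbove_range_abs_fval_sub A B
  obtain ⟨i, j, h⟩ := exists_dK_le_abs_fval_sub_add A B
  linarith [le_ciSup hbdd i, le_ciSup hbdd j]

/-- The summing-basis map `f_k : [ℕ]^{≤k} → c₀`, `f_k(n₁,…,n_j) = s_{n₁} + ⋯ + s_{n_j}`,
satisfies `½ d_K(n̄,m̄) ≤ ‖f_k(n̄) - f_k(m̄)‖_∞ ≤ d_K(n̄,m̄)`; here the sup norm of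
`f_k(A) - f_k(B)` is `⨆ i, |fval A i - fval B i|`. -/
theorem summing_basis_embedding (k : ℕ) (A B : Finset ℕ) (hA : A.card ≤ k) (hB : B.card ≤ k) :
    (dK A B : ℝ) / 2 ≤ (⨆ i : ℕ, |fval A i - fval B i|) ∧
      (⨆ i : ℕ, |fval A i - fval B i|) ≤ (dK A B : ℝ) :=
  summing_basis_embedding_general A B
end

section
/- Let $X$ be a Banach space, $X^*$ its dual, $x^* \in X^* \setminus \{0\}$, and $(x_n^*)$ a weak*-null sequence in $X^*$. Then $\limsup_{n\to\infty} \|x^* + x_n^*\| \ge \|x^*\| \left(1 + \overline\delta_X^*\left( \frac{\limsup_n \|x_n^*\|}{\|x^*\|} \right)\right)$, where $\overline\delta_X^*$ is the modulus of weak* asymptotic uniform convexity of $X^*$. -/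
/-!
By Banach–Steinhaus the sequence `ψ` is bounded, and weak*-lower semicontinuity of the norm gives
`‖φ‖ ≤ L := limsup ‖φ + ψ n‖`. Fix a finite `S ⊆ X`. On the finite-dimensional span of `S` the
functionals `ψ n` tend to `0` in norm, so by Hahn–Banach they can be moved by a vanishing amount
into the annihilator of `S`. Taking `n` with `‖ψ n‖ ≈ s := limsup ‖ψ n‖` and `‖φ + ψ n‖ ≲ L`, and
rescaling the moved functional to norm `s`, gives a unit `y` vanishing on `S` with
`‖φ + s • y‖ ≤ L + ε`. Dividing by `‖φ‖` bounds `δ̄*_X (s / ‖φ‖)` by `L / ‖φ‖ - 1`.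
-/

open Filter NormedSpace

/-- The modulus of weak* asymptotic uniform convexity of `X*`:
`δ̄*_X(t) = inf_{‖x*‖=1} sup_E inf_{y* ∈ ∂B_E} ‖x* + t y*‖ - 1`, where `E` runs over
the weak*-closed finite-codimensional subspaces of `X*`, i.e. over the annihilators
of finite subsets of `X`. -/
noncomputable def deltaStar (X : Type*) [NormedAddCommGroup X] [NormedSpace ℝ X] (t : ℝ) : ℝ :=
  ⨅ xs : {φ : StrongDual ℝ X // ‖φ‖ = 1},
    ⨆ F : Finset X,
      ⨅ ys : {ψ : StrongDual ℝ X // ‖ψ‖ = 1 ∧ ∀ v ∈ F, ψ v = 0},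
        (‖xs.1 + t • ys.1‖ - 1)

open Topology

section Approximation

variable {𝕜 E F ι : Type*} {l : Filter ι}

theorem norm_add_smul_le_norm_add_add_abs [SeminormedAddCommGroup E] [NormedSpace ℝ E]
    (x u z : E) (t : ℝ) (hu : ‖u‖ = 1) (hz : z = ‖z‖ • u) :
    ‖x + t • u‖ ≤ ‖x + z‖ + |t - ‖z‖| :=
  calc ‖x + t • u‖ = ‖(x + z) + (t - ‖z‖) • u‖ := by rw [sub_smul, ← hz]; abel_nf
    _ ≤ ‖x + z‖ + ‖(t - ‖z‖) • u‖ := norm_add_le _ _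
    _ = ‖x + z‖ + |t - ‖z‖| := by rw [norm_smul, hu, mul_one, Real.norm_eq_abs]

theorem isBoundedUnder_norm_const_add [SeminormedAddCommGroup E] (x : E) {u : ι → E}
    (hu : IsBoundedUnder (· ≤ ·) l fun i => ‖u i‖) :
    IsBoundedUnder (· ≤ ·) l fun i => ‖x + u i‖ :=
  (isBoundedUnder_le_add isBoundedUnder_const hu).mono_le
    (Eventually.of_forall fun i => norm_add_le x (u i))

theorem tendsto_norm_comp_subtypeL_of_tendsto_apply [NontriviallyNormedField 𝕜]
    [CompleteSpace 𝕜] [NormedAddCommGroup E] [NormedSpace 𝕜 E] [NormedAddCommGroup F]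
    [NormedSpace 𝕜 F] (Y : Submodule 𝕜 E) [FiniteDimensional 𝕜 Y] (χ : ι → E →L[𝕜] F)
    (h : ∀ v ∈ Y, Tendsto (fun i => χ i v) l (𝓝 0)) :
    Tendsto (fun i => ‖(χ i).comp Y.subtypeL‖) l (𝓝 0) := by
  let b := Module.finBasis 𝕜 Y
  obtain ⟨C, -, hC⟩ := b.exists_opNorm_le (F := F)
  have hsum : Tendsto (fun i => C * ∑ j, ‖χ i (b j)‖) l (𝓝 0) := by
    simpa using (tendsto_finsetSum _ fun j _ => (h _ (b j).2).norm).const_mul C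
  refine squeeze_zero (fun _ => norm_nonneg _) (fun i => hC (by positivity) fun j => ?_) hsum
  exact Finset.single_le_sum (f := fun j => ‖χ i (b j)‖) (fun _ _ => norm_nonneg _)
    (Finset.mem_univ j)

theorem exists_annihilating_norm_sub_eq [RCLike 𝕜] [SeminormedAddCommGroup E]
    [NormedSpace 𝕜 E] (Y : Submodule 𝕜 E) (χ : StrongDual 𝕜 E) :
    ∃ ζ : StrongDual 𝕜 E, (∀ v ∈ Y, ζ v = 0) ∧ ‖χ - ζ‖ = ‖χ.comp Y.subtypeL‖ := by
  obtain ⟨η, hη, hnorm⟩ := exists_extension_norm_eq Y (χ.comp Y.subtypeL)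
  exact ⟨χ - η, fun v hv => by simp [hη ⟨v, hv⟩], by rw [sub_sub_cancel, hnorm]⟩

theorem exists_annihilating_tendsto_norm_sub [RCLike 𝕜] [NormedAddCommGroup E]
    [NormedSpace 𝕜 E] (χ : ι → StrongDual 𝕜 E) (hχ : ∀ v, Tendsto (fun i => χ i v) l (𝓝 0))
    (S : Finset E) :
    ∃ ζ : ι → StrongDual 𝕜 E, (∀ i, ∀ v ∈ S, ζ i v = 0) ∧
      Tendsto (fun i => ‖χ i - ζ i‖) l (𝓝 0) := by
  let Y := Submodule.span 𝕜 (S : Set E)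
  choose ζ hζY hζ using fun i => exists_annihilating_norm_sub_eq Y (χ i)
  refine ⟨ζ, fun i v hv => hζY i v (Submodule.subset_span hv), ?_⟩
  simpa only [hζ] using tendsto_norm_comp_subtypeL_of_tendsto_apply Y χ fun v _ => hχ v

theorem norm_le_limsup_norm_of_tendsto_apply [DenselyNormedField 𝕜]
    [NormedAddCommGroup E] [NormedSpace 𝕜 E] [SeminormedAddCommGroup F] [NormedSpace 𝕜 F]
    [l.NeBot] (f : E →L[𝕜] F) (g : ι → E →L[𝕜] F)
    (hg : ∀ x, Tendsto (fun i => g i x) l (𝓝 (f x)))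
    (hb : IsBoundedUnder (· ≤ ·) l fun i => ‖g i‖) :
    ‖f‖ ≤ limsup (fun i => ‖g i‖) l := by
  refine le_of_forall_lt_imp_le_of_dense fun r hr => ?_
  obtain ⟨x, hx, hrx⟩ := f.exists_lt_apply_of_lt_opNorm hr
  refine le_limsup_of_frequently_le (Eventually.frequently ?_) hb
  filter_upwards [(hg x).norm.eventually_const_lt hrx] with i hi
  exact hi.le.trans ((g i).le_of_opNorm_le_of_le le_rfl hx.le |>.trans_eq (mul_one _))

theorem exists_annihilating_norm_add_add_abs_le {X : Type*} [NormedAddCommGroup X]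
    [NormedSpace ℝ X] [l.NeBot] (φ : StrongDual ℝ X) (ψ : ι → StrongDual ℝ X)
    (hψ : ∀ v, Tendsto (fun i => ψ i v) l (𝓝 0))
    (hb : IsBoundedUnder (· ≤ ·) l fun i => ‖ψ i‖) (S : Finset X) {ε : ℝ} (hε : 0 < ε) :
    ∃ z : StrongDual ℝ X, (∀ v ∈ S, z v = 0) ∧
      ‖φ + z‖ + |limsup (fun i => ‖ψ i‖) l - ‖z‖| ≤ limsup (fun i => ‖φ + ψ i‖) l + ε := by
  obtain ⟨ζ, hζS, hζ⟩ := exists_annihilating_tendsto_norm_sub ψ hψ S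
  set s := limsup (fun i => ‖ψ i‖) l
  set L := limsup (fun i => ‖φ + ψ i‖) l
  have hcob : IsCoboundedUnder (· ≤ ·) l fun i => ‖ψ i‖ :=
    isBoundedUnder_of ⟨0, fun i => norm_nonneg (ψ i)⟩ |>.isCoboundedUnder_le
  have hclose : ∀ᶠ i in l, ‖ψ i - ζ i‖ < ε / 4 := hζ.eventually_lt_const (by positivity)
  have hL : ∀ᶠ i in l, ‖φ + ψ i‖ < L + ε / 4 := eventually_lt_of_limsup_lt (by linarith)
    (isBoundedUnder_norm_const_add φ hb)
  have hs_upper : ∀ᶠ i in l, ‖ψ i‖ < s + ε / 4 := eventually_lt_of_limsup_lt (by linarith) hb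
  have hs_lower : ∃ᶠ i in l, s - ε / 4 < ‖ψ i‖ := frequently_lt_of_lt_limsup hcob (by linarith)
  obtain ⟨i, ⟨⟨hi_close, hi_L⟩, hi_upper⟩, hi_lower⟩ :=
    (((hclose.and hL).and hs_upper).and_frequently hs_lower).exists
  refine ⟨ζ i, hζS i, ?_⟩
  have h_add : ‖φ + ζ i‖ ≤ ‖φ + ψ i‖ + ‖ψ i - ζ i‖ := by
    rw [show φ + ζ i = φ + ψ i - (ψ i - ζ i) by abel]
    exact norm_sub_le _ _
  have h_abs : |s - ‖ζ i‖| ≤ |s - ‖ψ i‖| + ‖ψ i - ζ i‖ :=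
    (abs_sub_le _ _ _).trans (add_le_add le_rfl (abs_norm_sub_norm_le _ _))
  have h_near : |s - ‖ψ i‖| < ε / 4 := abs_sub_lt_iff.2 ⟨by linarith, by linarith⟩
  linarith

end Approximation

section deltaStar

variable {X : Type*} [NormedAddCommGroup X] [NormedSpace ℝ X]

abbrev AnnihilatorSphere (S : Finset X) : Type _ :=
  {ψ : StrongDual ℝ X // ‖ψ‖ = 1 ∧ ∀ v ∈ S, ψ v = 0}

theorem neg_one_le_iInf_norm_add_smul_sub_one (x : StrongDual ℝ X) (t : ℝ) (S : Finset X) :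
    -1 ≤ ⨅ y : AnnihilatorSphere S, (‖x + t • y.1‖ - 1) := by
  rcases isEmpty_or_nonempty (AnnihilatorSphere S) with _ | _
  · rw [Real.iInf_of_isEmpty]
    norm_num
  · exact le_ciInf fun y => by linarith [norm_nonneg (x + t • y.1)]

theorem deltaStar_le_iSup (x : StrongDual ℝ X) (hx : ‖x‖ = 1) (t : ℝ) :
    deltaStar X t ≤ ⨆ S : Finset X, ⨅ y : AnnihilatorSphere S, (‖x + t • y.1‖ - 1) := by
  refine ciInf_le ⟨-1, Set.forall_mem_range.2 fun x' => ?_⟩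
    (⟨x, hx⟩ : {φ : StrongDual ℝ X // ‖φ‖ = 1})
  by_cases hbdd : BddAbove (Set.range fun S : Finset X =>
      ⨅ y : AnnihilatorSphere S, (‖x'.1 + t • y.1‖ - 1))
  · exact le_ciSup_of_le hbdd ∅ (neg_one_le_iInf_norm_add_smul_sub_one x'.1 t ∅)
  · rw [Real.iSup_of_not_bddAbove hbdd]
    norm_num

theorem exists_annihilatorSphere_norm_add_smul_le (x z : StrongDual ℝ X) (t : ℝ)
    {S : Finset X} (hz : ∀ v ∈ S, z v = 0) (y₀ : AnnihilatorSphere S) :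
    ∃ y : AnnihilatorSphere S, ‖x + t • y.1‖ ≤ ‖x + z‖ + |t - ‖z‖| := by
  by_cases hz₀ : z = 0
  · exact ⟨y₀, norm_add_smul_le_norm_add_add_abs x y₀.1 z t y₀.2.1 (by simp [hz₀])⟩
  · refine ⟨⟨‖z‖⁻¹ • z, norm_smul_inv_norm hz₀, fun v hv => by simp [hz v hv]⟩, ?_⟩
    exact norm_add_smul_le_norm_add_add_abs x _ z t (norm_smul_inv_norm hz₀)
      (smul_inv_smul₀ (norm_ne_zero_iff.2 hz₀) z).symm

theorem iInf_norm_add_smul_sub_one_le (x : StrongDual ℝ X) (t M : ℝ) (hM : 1 ≤ M)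
    (S : Finset X)
    (h : ∀ ε > 0, ∃ z : StrongDual ℝ X, (∀ v ∈ S, z v = 0) ∧ ‖x + z‖ + |t - ‖z‖| ≤ M + ε) :
    ⨅ y : AnnihilatorSphere S, (‖x + t • y.1‖ - 1) ≤ M - 1 := by
  rcases isEmpty_or_nonempty (AnnihilatorSphere S) with _ | ⟨⟨y₀⟩⟩
  · -- an empty infimum is `0` in `ℝ`
    rw [Real.iInf_of_isEmpty]
    linarith
  refine le_of_forall_pos_le_add fun ε hε => ?_
  obtain ⟨z, hzS, hz⟩ := h ε hε
  obtain ⟨y, hy⟩ := exists_annihilatorSphere_norm_add_smul_le x z t hzS y₀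
  have hbdd : BddBelow (Set.range fun y : AnnihilatorSphere S => ‖x + t • y.1‖ - 1) :=
    ⟨-1, Set.forall_mem_range.2 fun y => by linarith [norm_nonneg (x + t • y.1)]⟩
  linarith [ciInf_le hbdd y]

theorem deltaStar_le (x : StrongDual ℝ X) (hx : ‖x‖ = 1) (t M : ℝ) (hM : 1 ≤ M)
    (h : ∀ S : Finset X, ∀ ε > 0,
      ∃ z : StrongDual ℝ X, (∀ v ∈ S, z v = 0) ∧ ‖x + z‖ + |t - ‖z‖| ≤ M + ε) :
    deltaStar X t ≤ M - 1 :=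
  (deltaStar_le_iSup x hx t).trans <|
    ciSup_le fun S => iInf_norm_add_smul_sub_one_le x t M hM S (h S)

theorem norm_mul_one_add_deltaStar_le (x : StrongDual ℝ X) (hx : x ≠ 0) (t M : ℝ)
    (hM : ‖x‖ ≤ M)
    (h : ∀ S : Finset X, ∀ ε > 0,
      ∃ z : StrongDual ℝ X, (∀ v ∈ S, z v = 0) ∧ ‖x + z‖ + |t - ‖z‖| ≤ M + ε) :
    ‖x‖ * (1 + deltaStar X (t / ‖x‖)) ≤ M := by
  have hc : 0 < ‖x‖ := norm_pos_iff.2 hx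
  have hunit : ‖‖x‖⁻¹ • x‖ = 1 := by rw [norm_smul, norm_inv, norm_norm, inv_mul_cancel₀ hc.ne']
  have hδ : deltaStar X (t / ‖x‖) ≤ M / ‖x‖ - 1 := by
    refine deltaStar_le _ hunit _ _ ((one_le_div hc).2 hM) fun S ε hε => ?_
    obtain ⟨z, hzS, hz⟩ := h S (‖x‖ * ε) (by positivity)
    refine ⟨‖x‖⁻¹ • z, fun v hv => by simp [hzS v hv], ?_⟩
    rw [← smul_add, norm_smul, norm_smul, norm_inv, norm_norm, div_eq_inv_mul, ← mul_sub,
      abs_mul, abs_inv, abs_norm, ← mul_add, inv_mul_eq_div, div_le_iff₀ hc, add_mul,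
      div_mul_cancel₀ M hc.ne']
    linarith
  calc ‖x‖ * (1 + deltaStar X (t / ‖x‖)) ≤ ‖x‖ * (M / ‖x‖) := by gcongr; linarith
    _ = M := mul_div_cancel₀ M hc.ne'

end deltaStar

/-- For any weak*-null sequence `(x*_n)` in `X*` and any `x* ≠ 0`,
`limsup ‖x* + x*_n‖ ≥ ‖x*‖ (1 + δ̄*_X(limsup ‖x*_n‖ / ‖x*‖))`. -/
theorem limsup_ge_of_weakStarNull (X : Type*) [NormedAddCommGroup X] [NormedSpace ℝ X]
    [CompleteSpace X] (φ : StrongDual ℝ X) (hφ : φ ≠ 0) (ψ : ℕ → StrongDual ℝ X)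
    (hw : ∀ v : X, Tendsto (fun n => ψ n v) atTop (nhds 0)) :
    ‖φ‖ * (1 + deltaStar X (atTop.limsup (fun n => ‖ψ n‖) / ‖φ‖)) ≤
      atTop.limsup fun n => ‖φ + ψ n‖ := by
  obtain ⟨C, hC⟩ := banach_steinhaus fun v =>
    (hw v).norm.bddAbove_range.imp fun C hC n => hC (Set.mem_range_self n)
  have hb : IsBoundedUnder (· ≤ ·) atTop fun n => ‖ψ n‖ := isBoundedUnder_of ⟨C, hC⟩
  refine norm_mul_one_add_deltaStar_le φ hφ _ _ ?_ fun S ε hε =>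
    exists_annihilating_norm_add_add_abs_le φ ψ hw hb S hε
  exact norm_le_limsup_norm_of_tendsto_apply φ (fun n => φ + ψ n)
    (fun v => by simpa using tendsto_const_nhds.add (hw v)) (isBoundedUnder_norm_const_add φ hb)
end

section
/- Let $C \ge 1$, $k \in \mathbb N$, and $f : ([\mathbb N]^k, d_{\mathbb K}) \to X$ be a Lipschitz map into a Banach space $X$. Suppose there exist an infinite set $\mathbb M \subseteq \mathbb N$ and nonnegative constants $K_1, \ldots, K_k$ and a decomposition $f(\overline n) = \sum_{\overline m \preceq \overline n} x^*(\overline m)$ with $K_i \le \|x^*(n_1,\ldots,n_i)\| \le K_i + \varepsilon$ for all $(n_1,\ldots,n_i) \in [\mathbb M]^i$. Then for all $\overline n, \overline m \in [\mathbb M]^k$, $\|f(\overline n) - f(\overline m)\| \le 2\sum_{i=1}^k K_i + 2k\varepsilon$. -/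
/-- The initial segments of a finite subset of `ℕ` viewed as a strictly increasing tuple:
`m ⪯ n` iff `m ⊆ n` and `m` is downward closed inside `n`. -/
def initSegs (n : Finset ℕ) : Finset (Finset ℕ) :=
  n.powerset.filter fun s => ∀ a ∈ s, ∀ b ∈ n, b ≤ a → b ∈ s

lemma initSegs_comparable {n s t : Finset ℕ} (hs : s ∈ initSegs n) (ht : t ∈ initSegs n) :
    s ⊆ t ∨ t ⊆ s := by
  simp only [initSegs, Finset.mem_filter, Finset.mem_powerset] at hs ht
  by_cases h : s ⊆ t
  · exact Or.inl h
  · right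
    obtain ⟨a, has, hat⟩ := Finset.not_subset.mp h
    intro b hbt
    apply hs.2 a has b (ht.1 hbt)
    by_contra hba
    push_neg at hba
    exact hat (ht.2 b hbt a (hs.1 has) hba.le)

lemma initSegs_card_inj {n s t : Finset ℕ} (hs : s ∈ initSegs n) (ht : t ∈ initSegs n)
    (h : s.card = t.card) : s = t := by
  rcases initSegs_comparable hs ht with h' | h'
  · exact Finset.eq_of_subset_of_card_le h' h.ge
  · exact (Finset.eq_of_subset_of_card_le h' h.le).symm

/-- If a Lipschitz map `f : ([ℕ]^k, d_K) → X` decomposes along a tree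
`f(n̄) = ∑_{m̄ ⪯ n̄} x(m̄)` over an infinite set `M`, with
`K_i ≤ ‖x(n₁,…,n_i)‖ ≤ K_i + ε` for tuples in `M`, then for all `n̄, m̄ ∈ [M]^k` one has
`‖f(n̄) - f(m̄)‖ ≤ 2 ∑ K_i + 2kε`. -/
theorem norm_sub_le_of_tree_decomposition
    (X : Type*) [NormedAddCommGroup X] [NormedSpace ℝ X]
    (k : ℕ) (C : ℝ) (hC : 1 ≤ C) (L : ℝ) (f : Finset ℕ → X)
    (hLip : ∀ n m : Finset ℕ, n.card = k → m.card = k → ‖f n - f m‖ ≤ L * dK n m)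
    (M : Set ℕ) (hM : M.Infinite) (ε : ℝ) (hε : 0 ≤ ε)
    (K : ℕ → ℝ) (hK : ∀ i, 0 ≤ K i) (x : Finset ℕ → X)
    (hdec : ∀ n : Finset ℕ, ↑n ⊆ M → n.card = k → f n = ∑ s ∈ initSegs n, x s)
    (hbound : ∀ s : Finset ℕ, ↑s ⊆ M → s.Nonempty → s.card ≤ k →
      K s.card ≤ ‖x s‖ ∧ ‖x s‖ ≤ K s.card + ε) :
    ∀ n m : Finset ℕ, ↑n ⊆ M → ↑m ⊆ M → n.card = k → m.card = k →
      ‖f n - f m‖ ≤ 2 * (∑ i ∈ Finset.Icc 1 k, K i) + 2 * k * ε := by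
  intro n m hnM hmM hn hm
  have hemp : ∀ p : Finset ℕ, (∅ : Finset ℕ) ∈ initSegs p := by
    intro p; simp [initSegs]
  have key : ∀ p : Finset ℕ, ↑p ⊆ M → p.card = k →
      ‖∑ s ∈ (initSegs p).erase ∅, x s‖ ≤ (∑ i ∈ Finset.Icc 1 k, K i) + k * ε := by
    intro p hpM hp
    calc ‖∑ s ∈ (initSegs p).erase ∅, x s‖ ≤ ∑ s ∈ (initSegs p).erase ∅, ‖x s‖ :=
        norm_sum_le _ _
      _ ≤ ∑ s ∈ (initSegs p).erase ∅, (K s.card + ε) := by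
          apply Finset.sum_le_sum
          intro s hs
          have hs' := Finset.mem_of_mem_erase hs
          have hne : s ≠ ∅ := Finset.ne_of_mem_erase hs
          have hsub : s ⊆ p := Finset.mem_powerset.mp (Finset.mem_filter.mp hs').1
          exact (hbound s (fun a ha => hpM (hsub ha)) (Finset.nonempty_iff_ne_empty.mpr hne)
            (hp ▸ Finset.card_le_card hsub)).2
      _ = ∑ i ∈ ((initSegs p).erase ∅).image Finset.card, (K i + ε) := by
          rw [Finset.sum_image]
          intro s hs t ht h
          exact initSegs_card_inj (Finset.mem_of_mem_erase hs) (Finset.mem_of_mem_erase ht) h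
      _ ≤ ∑ i ∈ Finset.Icc 1 k, (K i + ε) := by
          apply Finset.sum_le_sum_of_subset_of_nonneg
          · intro i hi
            simp only [Finset.mem_image] at hi
            obtain ⟨s, hs, rfl⟩ := hi
            have hne : s ≠ ∅ := Finset.ne_of_mem_erase hs
            have hs' := Finset.mem_of_mem_erase hs
            have hsub : s ⊆ p := Finset.mem_powerset.mp (Finset.mem_filter.mp hs').1
            rw [Finset.mem_Icc]
            exact ⟨Finset.one_le_card.mpr (Finset.nonempty_iff_ne_empty.mpr hne),
              hp ▸ Finset.card_le_card hsub⟩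
          · intro i _ _
            have := hK i
            linarith
      _ = (∑ i ∈ Finset.Icc 1 k, K i) + k * ε := by
          rw [Finset.sum_add_distrib, Finset.sum_const, Nat.card_Icc]
          simp [nsmul_eq_mul]
  rw [hdec n hnM hn, hdec m hmM hm, ← Finset.add_sum_erase _ x (hemp n),
    ← Finset.add_sum_erase _ x (hemp m), add_sub_add_left_eq_sub]
  calc ‖(∑ s ∈ (initSegs n).erase ∅, x s) - ∑ s ∈ (initSegs m).erase ∅, x s‖
      ≤ ‖∑ s ∈ (initSegs n).erase ∅, x s‖ + ‖∑ s ∈ (initSegs m).erase ∅, x s‖ :=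
        norm_sub_le _ _
    _ ≤ ((∑ i ∈ Finset.Icc 1 k, K i) + k * ε) + ((∑ i ∈ Finset.Icc 1 k, K i) + k * ε) :=
        add_le_add (key n hnM hn) (key m hmM hm)
    _ = 2 * (∑ i ∈ Finset.Icc 1 k, K i) + 2 * k * ε := by ring
end

section
/- Let $p, q \in (1,\infty)$ with $q > p/(p-1)$. If a Banach space $X$ has the $p$-alternating Banach-Saks property and property $\mathcal Q_q$, then $X$ is reflexive. -/
/-! If `X` is not reflexive, Hahn–Banach in the bidual together with Helly's lemma gives
`xₙ ∈ B_X` and `fₙ ∈ B_{X*}` with `fᵢ xⱼ ≥ δ` for `i ≤ j` and `fᵢ xⱼ = 0` for `j < i`.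
Sets at interlaced distance `1` differ by an alternating sum, so along a subsequence provided by
the alternating Banach–Saks property, `A ↦ ∑_{a ∈ A} x_a` is `C (2k)^{1/p}`-Lipschitz on
`k`-sets, and property `𝒬_q` bounds its oscillation on some `[M]^k` by `C' k^{1/p + 1/q}`.
Testing two consecutive blocks of `M` against the `f_N` between them shows the oscillation is at
least `δ k`, which is impossible for large `k` since `1/p + 1/q < 1`. -/

open Filter

/-- Property `𝒬_q` with constant `C`: for every `k` and every Lipschitz map
`f : ([ℕ]^k, d_K) → X` (with `L` any bound for `ω_f(1)`), there is an infinite `M ⊆ ℕ`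
such that `‖f(n̄) - f(m̄)‖ ≤ C · L · k^{1/q}` for all `n̄, m̄ ∈ [M]^k`. -/
def HasPropQ (X : Type*) [NormedAddCommGroup X] (q C : ℝ) : Prop :=
  ∀ (k : ℕ) (f : Finset ℕ → X) (L : ℝ), 0 ≤ L →
    (∀ n m : Finset ℕ, n.card = k → m.card = k → (dK n m : ℝ) ≤ 1 → ‖f n - f m‖ ≤ L) →
    ∃ M : Set ℕ, M.Infinite ∧ ∀ n m : Finset ℕ, ↑n ⊆ M → ↑m ⊆ M →
      n.card = k → m.card = k → ‖f n - f m‖ ≤ C * L * (k : ℝ) ^ (1 / q)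

/-- The `p`-alternating Banach–Saks property with constant `C`. -/
def HasAltBS (X : Type*) [NormedAddCommGroup X] [NormedSpace ℝ X] (p C : ℝ) : Prop :=
  ∀ x : ℕ → X, (∀ n, ‖x n‖ ≤ 1) → ∀ k : ℕ, ∃ M : Set ℕ, M.Infinite ∧
    ∀ n : Fin k → ℕ, StrictMono n → (∀ j, n j ∈ M) →
      ‖∑ j : Fin k, (-1 : ℝ) ^ (j : ℕ) • x (n j)‖ ≤ C * (k : ℝ) ^ (1 / p)

open Finset

def prefixCard (A : Finset ℕ) (t : ℕ) : ℕ := #{a ∈ A | a < t}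

lemma natAbs_card_inter_Icc_sub_le_dK (A B : Finset ℕ) (a b : ℕ) :
    (((A ∩ Icc a b).card : ℤ) - ((B ∩ Icc a b).card : ℤ)).natAbs ≤ dK A B := by
  refine le_csSup ⟨#A + #B, ?_⟩ ⟨a, b, rfl⟩
  rintro d ⟨a, b, rfl⟩
  have hA := card_le_card (inter_subset_left (s₁ := A) (s₂ := Icc a b))
  have hB := card_le_card (inter_subset_left (s₁ := B) (s₂ := Icc a b))
  omega

lemma prefixCard_add_card_inter_Icc (A : Finset ℕ) {a b : ℕ} (h : a ≤ b + 1) :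
    prefixCard A a + #(A ∩ Icc a b) = prefixCard A (b + 1) := by
  rw [prefixCard, prefixCard, ← card_union_of_disjoint]
  · congr 1
    ext n
    by_cases hn : n ∈ A <;> simp only [mem_union, mem_filter, mem_inter, mem_Icc, hn, true_and,
      false_and, or_false, iff_self]
    omega
  · rw [disjoint_left]
    simp only [mem_filter, mem_inter, mem_Icc]
    intros
    omega

lemma prefixCard_succ (A : Finset ℕ) (t : ℕ) :
    prefixCard A (t + 1) = prefixCard A t + if t ∈ A then 1 else 0 := by
  rw [← prefixCard_add_card_inter_Icc A (Nat.le_succ t), Icc_self]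
  split_ifs with ht <;> simp [ht]

lemma prefixCard_union {D E : Finset ℕ} (h : Disjoint D E) (t : ℕ) :
    prefixCard (D ∪ E) t = prefixCard D t + prefixCard E t := by
  rw [prefixCard, filter_union, card_union_of_disjoint (disjoint_filter_filter h)]
  rfl

lemma prefixCard_sdiff_add_prefixCard_inter (A B : Finset ℕ) (t : ℕ) :
    prefixCard (A \ B) t + prefixCard (A ∩ B) t = prefixCard A t := by
  rw [← prefixCard_union (disjoint_sdiff_inter A B), sdiff_union_inter]

lemma prefixCard_orderEmbOfFin (S : Finset ℕ) {n : ℕ} (h : #S = n) (j : Fin n) :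
    prefixCard S (S.orderEmbOfFin h j) = j := by
  have : {a ∈ S | a < S.orderEmbOfFin h j} = (Iio j).map (S.orderEmbOfFin h).toEmbedding := by
    ext a
    simp only [mem_filter, Finset.mem_map, mem_Iio, RelEmbedding.coe_toEmbedding]
    constructor
    · rintro ⟨ha, hlt⟩
      obtain ⟨i, rfl⟩ : a ∈ Set.range (S.orderEmbOfFin h) := by
        rwa [range_orderEmbOfFin]
      exact ⟨i, (S.orderEmbOfFin h).lt_iff_lt.mp hlt, rfl⟩
    · rintro ⟨i, hi, rfl⟩
      exact ⟨orderEmbOfFin_mem S h i, (S.orderEmbOfFin h).lt_iff_lt.mpr hi⟩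
  rw [prefixCard, this, card_map, Fin.card_Iio]

def Interlaced (A B : Finset ℕ) : Prop :=
  ∀ t, prefixCard B t ≤ prefixCard A t ∧ prefixCard A t ≤ prefixCard B t + 1

lemma interlaced_or_interlaced_of_dK_le_one {A B : Finset ℕ} (h : dK A B ≤ 1) :
    Interlaced A B ∨ Interlaced B A := by
  have step : ∀ s t, s ≤ t → ((prefixCard A t : ℤ) - prefixCard B t
      - (prefixCard A s - prefixCard B s)).natAbs ≤ 1 := by
    intro s t hst
    rcases t with _ | b
    · obtain rfl : s = 0 := by omega
      simp
    · have hA := prefixCard_add_card_inter_Icc A hst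
      have hB := prefixCard_add_card_inter_Icc B hst
      have := (natAbs_card_inter_Icc_sub_le_dK A B s b).trans h
      omega
  have zero : ∀ C : Finset ℕ, prefixCard C 0 = 0 := by simp [prefixCard]
  rw [Interlaced, Interlaced]
  by_contra! hc
  obtain ⟨⟨t₁, h₁⟩, t₂, h₂⟩ := hc
  have h₁' := step 0 t₁ (Nat.zero_le _)
  have h₂' := step 0 t₂ (Nat.zero_le _)
  rw [zero, zero] at h₁' h₂'
  rcases le_total t₁ t₂ with h | h
  · have := step _ _ h
    omega
  · have := step _ _ h
    omega

lemma Interlaced.sdiff {A B : Finset ℕ} (h : Interlaced A B) : Interlaced (A \ B) (B \ A) := by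
  intro t
  have hA := prefixCard_sdiff_add_prefixCard_inter A B t
  have hB := prefixCard_sdiff_add_prefixCard_inter B A t
  rw [inter_comm] at hB
  have := h t
  omega

lemma Interlaced.orderEmbOfFin_mem_iff_even {D E : Finset ℕ} (hint : Interlaced D E)
    (hDE : Disjoint D E) {n : ℕ} (h : #(D ∪ E) = n) (j : Fin n) :
    (D ∪ E).orderEmbOfFin h j ∈ D ↔ Even (j : ℕ) := by
  have hs := orderEmbOfFin_mem _ h j
  have hj := prefixCard_orderEmbOfFin (D ∪ E) h j
  rw [prefixCard_union hDE] at hj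
  set s := (D ∪ E).orderEmbOfFin h j
  have hD := prefixCard_succ D s
  have hE := prefixCard_succ E s
  have := hint s
  have := hint (s + 1)
  rw [Nat.even_iff]
  by_cases hsD : s ∈ D
  · have hsE : s ∉ E := disjoint_left.mp hDE hsD
    simp only [hsD, hsE, if_true, if_false] at hD hE
    exact iff_of_true hsD (by omega)
  · have hsE : s ∈ E := (mem_union.mp hs).resolve_left hsD
    simp only [hsD, hsE, if_true, if_false] at hD hE
    exact iff_of_false hsD (by omega)

lemma Interlaced.sum_sub_sum_eq_alternating {Y : Type*} [AddCommGroup Y] [Module ℝ Y]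
    (y : ℕ → Y) {D E : Finset ℕ} (hint : Interlaced D E) (hDE : Disjoint D E) {n : ℕ}
    (h : #(D ∪ E) = n) :
    ∑ a ∈ D, y a - ∑ a ∈ E, y a
      = ∑ j : Fin n, (-1 : ℝ) ^ (j : ℕ) • y ((D ∪ E).orderEmbOfFin h j) := by
  have hsign : ∀ j : Fin n, (-1 : ℝ) ^ (j : ℕ) • y ((D ∪ E).orderEmbOfFin h j)
      = (fun s => if s ∈ D then y s else -y s) ((D ∪ E).orderEmbOfFin h j) := by
    intro j
    by_cases hj : Even (j : ℕ)
    · simp [hj.neg_one_pow, (hint.orderEmbOfFin_mem_iff_even hDE h j).mpr hj]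
    · simp [(Nat.not_even_iff_odd.mp hj).neg_one_pow,
        mt (hint.orderEmbOfFin_mem_iff_even hDE h j).mp hj]
  rw [Fintype.sum_congr _ _ hsign, ← sum_image (f := fun s => if s ∈ D then y s else -y s)
    (fun i _ j _ hij => (orderEmbOfFin _ h).injective hij), image_orderEmbOfFin_univ,
    sum_union hDE, sub_eq_add_neg, ← sum_neg_distrib]
  congr 1
  · exact sum_congr rfl fun a ha => (if_pos ha).symm
  · exact sum_congr rfl fun a ha => (if_neg (disjoint_right.mp hDE ha)).symm

lemma exists_alternating_of_dK_le_one {Y : Type*} [NormedAddCommGroup Y] [NormedSpace ℝ Y]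
    (y : ℕ → Y) {A B : Finset ℕ} (h : dK A B ≤ 1) :
    ∃ (r : ℕ) (v : Fin r → ℕ), r ≤ #A + #B ∧ StrictMono v ∧
      ‖∑ a ∈ A, y a - ∑ b ∈ B, y b‖ = ‖∑ j : Fin r, (-1 : ℝ) ^ (j : ℕ) • y (v j)‖ := by
  have key : ∀ A B : Finset ℕ, Interlaced A B → ∃ (r : ℕ) (v : Fin r → ℕ),
      r ≤ #A + #B ∧ StrictMono v ∧
      ∑ a ∈ A, y a - ∑ b ∈ B, y b = ∑ j : Fin r, (-1 : ℝ) ^ (j : ℕ) • y (v j) := by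
    intro A B hAB
    refine ⟨_, _, ?_, (orderEmbOfFin (A \ B ∪ B \ A) rfl).strictMono, ?_⟩
    · exact (card_union_le _ _).trans (add_le_add (card_le_card sdiff_subset)
        (card_le_card sdiff_subset))
    · rw [← sum_sdiff_sub_sum_sdiff]
      exact hAB.sdiff.sum_sub_sum_eq_alternating y disjoint_sdiff_sdiff rfl
  rcases interlaced_or_interlaced_of_dK_le_one h with hAB | hBA
  · obtain ⟨r, v, hr, hv, heq⟩ := key A B hAB
    exact ⟨r, v, hr, hv, by rw [heq]⟩
  · obtain ⟨r, v, hr, hv, heq⟩ := key B A hBA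
    exact ⟨r, v, by omega, hv, by rw [norm_sub_rev, heq]⟩

section AltBS

variable {X : Type*} [NormedAddCommGroup X] [NormedSpace ℝ X] {p C : ℝ} {x : ℕ → X}

lemma HasAltBS.exists_subset (h : HasAltBS X p C) (hx : ∀ n, ‖x n‖ ≤ 1) (k : ℕ) {N : Set ℕ}
    (hN : N.Infinite) :
    ∃ M ⊆ N, M.Infinite ∧ ∀ n : Fin k → ℕ, StrictMono n → (∀ j, n j ∈ M) →
      ‖∑ j : Fin k, (-1 : ℝ) ^ (j : ℕ) • x (n j)‖ ≤ C * (k : ℝ) ^ (1 / p) := by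
  have he : StrictMono (Nat.nth (· ∈ N)) := Nat.nth_strictMono hN
  obtain ⟨M, hM, hbound⟩ := h (fun i => x (Nat.nth (· ∈ N) i)) (fun i => hx _) k
  refine ⟨Nat.nth (· ∈ N) '' M, ?_, hM.image he.injective.injOn, fun n hn hnM => ?_⟩
  · rintro _ ⟨i, -, rfl⟩
    exact Nat.nth_mem_of_infinite hN i
  choose m hmM hme using hnM
  have hm : StrictMono m := fun i j hij => he.lt_iff_lt.mp (by rw [hme, hme]; exact hn hij)
  simpa only [hme] using hbound m hm hmM

lemma HasAltBS.exists_forall_le (h : HasAltBS X p C) (hx : ∀ n, ‖x n‖ ≤ 1) (K : ℕ) :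
    ∃ M : Set ℕ, M.Infinite ∧ ∀ r ≤ K, ∀ n : Fin r → ℕ, StrictMono n → (∀ j, n j ∈ M) →
      ‖∑ j : Fin r, (-1 : ℝ) ^ (j : ℕ) • x (n j)‖ ≤ C * (r : ℝ) ^ (1 / p) := by
  induction K with
  | zero =>
    obtain ⟨M, -, hM, hbound⟩ := h.exists_subset hx 0 Set.infinite_univ
    exact ⟨M, hM, fun r hr => by rwa [Nat.le_zero.mp hr]⟩
  | succ K ih =>
    obtain ⟨M, hM, hbound⟩ := ih
    obtain ⟨M', hM'M, hM', hbound'⟩ := h.exists_subset hx (K + 1) hM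
    refine ⟨M', hM', fun r hr n hn hnM => ?_⟩
    rcases Nat.le_succ_iff.mp hr with hr | rfl
    · exact hbound r hr n hn fun j => hM'M (hnM j)
    · exact hbound' n hn hnM

lemma HasAltBS.exists_strictMono_norm_sum_sub_sum_le (h : HasAltBS X p C) (hC : 0 ≤ C)
    (hp : 0 ≤ p) (hx : ∀ n, ‖x n‖ ≤ 1) (k : ℕ) :
    ∃ e : ℕ → ℕ, StrictMono e ∧ ∀ A B : Finset ℕ, #A = k → #B = k → dK A B ≤ 1 →
      ‖∑ a ∈ A, x (e a) - ∑ b ∈ B, x (e b)‖ ≤ C * (2 * k : ℝ) ^ (1 / p) := by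
  obtain ⟨M, hM, hbound⟩ := h.exists_forall_le hx (2 * k)
  have he : StrictMono (Nat.nth (· ∈ M)) := Nat.nth_strictMono hM
  refine ⟨Nat.nth (· ∈ M), he, fun A B hA hB hAB => ?_⟩
  obtain ⟨r, v, hr, hv, heq⟩ := exists_alternating_of_dK_le_one (fun a => x (Nat.nth (· ∈ M) a)) hAB
  rw [heq]
  calc _ ≤ C * (r : ℝ) ^ (1 / p) :=
        hbound r (by omega) _ (he.comp hv) fun j => Nat.nth_mem_of_infinite hM _
    _ ≤ C * (2 * k : ℝ) ^ (1 / p) := by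
        gcongr
        exact_mod_cast (show r ≤ 2 * k by omega)

end AltBS

section James

open NormedSpace

variable {X : Type*} [NormedAddCommGroup X] [NormedSpace ℝ X]

lemma exists_inclusionInDoubleDual_eq_of_forall_apply_eq_zero {ι : Type*} [Finite ι]
    (v : ι → X) (H : StrongDual ℝ (StrongDual ℝ X))
    (hH : ∀ f : StrongDual ℝ X, (∀ i, f (v i) = 0) → H f = 0) :
    ∃ y, inclusionInDoubleDual ℝ X y = H := by
  have _ := Fintype.ofFinite ι
  have hspan : (H : StrongDual ℝ X →ₗ[ℝ] ℝ) ∈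
      Submodule.span ℝ (Set.range fun i => (inclusionInDoubleDual ℝ X (v i) : _ →ₗ[ℝ] ℝ)) := by
    refine mem_span_of_iInf_ker_le_ker fun f hf => ?_
    simp only [Submodule.mem_iInf, LinearMap.mem_ker, ContinuousLinearMap.coe_coe,
      dual_def] at hf ⊢
    exact hH f hf
  obtain ⟨c, hc⟩ := (Submodule.mem_span_range_iff_exists_fun ℝ).1 hspan
  refine ⟨∑ i, c i • v i, ContinuousLinearMap.ext fun f => ?_⟩
  simpa using LinearMap.congr_fun hc f

lemma exists_norm_le_one_lt_apply_forall_apply_eq_zero (F : StrongDual ℝ (StrongDual ℝ X))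
    {θ : ℝ} (hθ : 0 < θ) (hF : ∀ y, θ < ‖F - inclusionInDoubleDual ℝ X y‖)
    {ι : Type*} [Finite ι] (v : ι → X) :
    ∃ f : StrongDual ℝ X, ‖f‖ ≤ 1 ∧ θ < F f ∧ ∀ i, f (v i) = 0 := by
  by_contra! hcon
  let Z : Submodule ℝ (StrongDual ℝ X) := ⨅ i,
    LinearMap.ker (inclusionInDoubleDual ℝ X (v i) : StrongDual ℝ X →ₗ[ℝ] ℝ)
  have hmemZ : ∀ f, f ∈ Z ↔ ∀ i, f (v i) = 0 := by
    simp [Z, Submodule.mem_iInf]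
  -- `F` has norm at most `θ` on the annihilator `Z`; extending `F|_Z` by Hahn–Banach to `G`,
  -- the functional `F - G` vanishes on `Z`, hence comes from `X`, and `‖F - (F - G)‖ ≤ θ`.
  obtain ⟨G, hGext, hGnorm⟩ := exists_extension_norm_eq Z (F.comp Z.subtypeL)
  have hG : ‖G‖ ≤ θ := by
    rw [hGnorm]
    refine ContinuousLinearMap.opNorm_le_of_unit_norm hθ.le fun f hf => ?_
    have hf' : ∀ i, (f : StrongDual ℝ X) (v i) = 0 := (hmemZ f).1 f.2
    by_contra! hlt
    rw [Real.norm_eq_abs, lt_abs] at hlt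
    rcases hlt with hlt | hlt
    · obtain ⟨i, hi⟩ := hcon f hf.le hlt
      exact hi (hf' i)
    · obtain ⟨i, hi⟩ := hcon (-f) ((norm_neg _).trans_le hf.le) (by simpa using hlt)
      exact hi (by simp [hf' i])
  obtain ⟨y, hy⟩ := exists_inclusionInDoubleDual_eq_of_forall_apply_eq_zero v (F - G)
    fun f hf => by simpa [sub_eq_zero] using (hGext ⟨f, (hmemZ f).2 hf⟩).symm
  have := hF y
  rw [hy] at this
  abel_nf at this
  linarith

lemma exists_norm_le_forall_abs_apply_sub_le (F : StrongDual ℝ (StrongDual ℝ X))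
    {ι : Type*} [Fintype ι] (g : ι → StrongDual ℝ X) {ε : ℝ} (hε : 0 < ε) :
    ∃ x : X, ‖x‖ ≤ ‖F‖ + ε ∧ ∀ i, |g i x - F (g i)| ≤ ε := by
  classical
  set R := ‖F‖ + ε
  have hR : ‖F‖ < R := by simp [R, hε]
  have hR0 : 0 < R := (norm_nonneg F).trans_lt hR
  let T : X →L[ℝ] (ι → ℝ) := ContinuousLinearMap.pi g
  let w : ι → ℝ := fun i => F (g i)
  suffices hw : w ∈ closure (T '' Metric.closedBall 0 R) by
    obtain ⟨_, ⟨x, hx, rfl⟩, hdist⟩ := Metric.mem_closure_iff.mp hw ε hε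
    refine ⟨x, mem_closedBall_zero_iff.mp hx, fun i => ?_⟩
    rw [abs_sub_comm]
    exact (dist_le_pi_dist w (T x) i).trans hdist.le
  by_contra hw
  obtain ⟨φ, u, hlt, hgt⟩ := geometric_hahn_banach_closed_point
    ((convex_closedBall 0 R).linear_image (T : X →ₗ[ℝ] (ι → ℝ))).closure isClosed_closure hw
  have hT : ∀ x, ‖x‖ ≤ R → φ (T x) < u := fun x hx =>
    hlt _ (subset_closure ⟨x, mem_closedBall_zero_iff.mpr hx, rfl⟩)
  have hu : 0 < u := by simpa using hT 0 (by simp [hR0.le])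
  -- `φ ∘ T` is a combination of the `g i`, so `F` sends it to `φ w`
  let a : ι → ℝ := fun i => φ fun j => if i = j then 1 else 0
  have hφ : ∀ z, φ z = ∑ i, z i * a i := fun z => by
    simpa using LinearMap.pi_apply_eq_sum_univ (φ : (ι → ℝ) →ₗ[ℝ] ℝ) z
  have hFG : F (∑ i, a i • g i) = φ w := by simp [hφ w, w, mul_comm]
  have hG : ‖∑ i, a i • g i‖ ≤ u / R := by
    refine ContinuousLinearMap.opNorm_le_of_unit_norm (by positivity) fun x hx => ?_
    have hφT : ∀ x, (∑ i, a i • g i) x = φ (T x) := fun x => by simp [hφ, T, mul_comm]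
    have h₁ := hT (R • x) (by simp [norm_smul, hx, abs_of_pos hR0])
    have h₂ := hT (-(R • x)) (by simp [norm_smul, hx, abs_of_pos hR0])
    rw [map_smul, map_smul, smul_eq_mul] at h₁
    rw [map_neg, map_neg, map_smul, map_smul, smul_eq_mul] at h₂
    rw [Real.norm_eq_abs, hφT, abs_le]
    constructor
    · rw [neg_le, le_div_iff₀ hR0]
      linarith
    · rw [le_div_iff₀ hR0]
      linarith
  have : F (∑ i, a i • g i) ≤ ‖F‖ * (u / R) :=
    (le_abs_self _).trans ((F.le_opNorm _).trans (by gcongr))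
  have : ‖F‖ * (u / R) < u := by
    rw [mul_div_assoc', div_lt_iff₀ hR0]
    exact mul_lt_mul_of_pos_right hR hu |>.trans_eq (mul_comm _ _)
  linarith

lemma exists_forall_lt_norm_sub_inclusionInDoubleDual [CompleteSpace X]
    (h : ¬ Function.Surjective (inclusionInDoubleDual ℝ X)) :
    ∃ (F : StrongDual ℝ (StrongDual ℝ X)) (θ : ℝ), 0 < θ ∧
      ∀ y, θ < ‖F - inclusionInDoubleDual ℝ X y‖ := by
  obtain ⟨F, hF⟩ := not_forall.mp h
  have hclosed : IsClosed (Set.range (inclusionInDoubleDual ℝ X)) := by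
    have : Isometry (inclusionInDoubleDualLi ℝ (E := X)) := (inclusionInDoubleDualLi ℝ).isometry
    exact this.isClosedEmbedding.isClosed_range
  have hpos : 0 < Metric.infDist F (Set.range (inclusionInDoubleDual ℝ X)) :=
    (hclosed.notMem_iff_infDist_pos (Set.range_nonempty _)).mp hF
  refine ⟨F, _, half_pos hpos, fun y => (half_lt_self hpos).trans_le ?_⟩
  exact (Metric.infDist_le_dist_of_mem (Set.mem_range_self y)).trans_eq
    (dist_eq_norm (E := StrongDual ℝ (StrongDual ℝ X)) _ _)

lemma exists_james_system (F : StrongDual ℝ (StrongDual ℝ X)) {θ : ℝ} (hθ : 0 < θ)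
    (hF : ∀ y, θ < ‖F - inclusionInDoubleDual ℝ X y‖) :
    ∃ δ > 0, ∃ (x : ℕ → X) (f : ℕ → StrongDual ℝ X), (∀ n, ‖x n‖ ≤ 1) ∧ (∀ n, ‖f n‖ ≤ 1) ∧
      (∀ i j, i ≤ j → δ ≤ f i (x j)) ∧ (∀ i j, j < i → f i (x j) = 0) := by
  classical
  set R := ‖F‖ + θ / 2
  have hR : 0 < R := by positivity
  have hφ (S : Finset X) : ∃ f : StrongDual ℝ X, ‖f‖ ≤ 1 ∧ θ < F f ∧ ∀ v ∈ S, f v = 0 := by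
    obtain ⟨f, h₁, h₂, h₃⟩ := exists_norm_le_one_lt_apply_forall_apply_eq_zero F hθ hF
      ((↑) : S → X)
    exact ⟨f, h₁, h₂, fun v hv => h₃ ⟨v, hv⟩⟩
  have hψ (T : Finset (StrongDual ℝ X)) :
      ∃ x : X, ‖x‖ ≤ 1 ∧ ∀ g ∈ T, θ < F g → θ / 2 / R ≤ g x := by
    obtain ⟨x, hx, hgx⟩ := exists_norm_le_forall_abs_apply_sub_le F ((↑) : T → _) (half_pos hθ)
    refine ⟨R⁻¹ • x, ?_, fun g hg hFg => ?_⟩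
    · rw [norm_smul, Real.norm_of_nonneg (inv_nonneg.mpr hR.le), inv_mul_le_one₀ hR]
      exact hx
    · have := (abs_le.mp (hgx ⟨g, hg⟩)).1
      rw [map_smul, smul_eq_mul, div_eq_inv_mul]
      gcongr
      linarith
  choose φ hφ₁ hφ₂ hφ₃ using hφ
  choose ψ hψ₁ hψ₂ using hψ
  -- the state after `m` steps records `x 0, …, x (m-1)` and `f 0, …, f (m-1)`
  let state : ℕ → Finset X × Finset (StrongDual ℝ X) := fun m => Nat.rec (∅, ∅)
    (fun _ s => (insert (ψ (insert (φ s.1) s.2)) s.1, insert (φ s.1) s.2)) m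
  let f m := φ (state m).1
  let x m := ψ (insert (f m) (state m).2)
  have hstate (m : ℕ) : ∀ i < m, x i ∈ (state m).1 ∧ f i ∈ (state m).2 := by
    induction m with
    | zero => simp
    | succ m ih =>
      intro i hi
      change x i ∈ insert (x m) (state m).1 ∧ f i ∈ insert (f m) (state m).2
      rcases Nat.lt_succ_iff_lt_or_eq.mp hi with hi | rfl
      · exact ⟨mem_insert_of_mem (ih i hi).1, mem_insert_of_mem (ih i hi).2⟩
      · exact ⟨mem_insert_self _ _, mem_insert_self _ _⟩
  refine ⟨θ / 2 / R, by positivity, x, f, fun n => hψ₁ _, fun n => hφ₁ _,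
    fun i j hij => hψ₂ _ _ ?_ (hφ₂ _), fun i j hji => hφ₃ _ _ (hstate i j hji).1⟩
  rcases hij.lt_or_eq with hij | rfl
  · exact mem_insert_of_mem (hstate j i hij).2
  · exact mem_insert_self _ _

lemma card_mul_le_norm_sum_sub_sum {x : ℕ → X} {f : ℕ → StrongDual ℝ X} {δ : ℝ}
    (hf : ∀ n, ‖f n‖ ≤ 1) (hlow : ∀ i j, i ≤ j → δ ≤ f i (x j))
    (hzero : ∀ i j, j < i → f i (x j) = 0) {A B : Finset ℕ} {N : ℕ}
    (hA : ∀ a ∈ A, a < N) (hB : ∀ b ∈ B, N ≤ b) :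
    #B * δ ≤ ‖∑ b ∈ B, x b - ∑ a ∈ A, x a‖ :=
  calc #B * δ = ∑ b ∈ B, δ := by rw [sum_const, nsmul_eq_mul]
    _ ≤ ∑ b ∈ B, f N (x b) := sum_le_sum fun b hb => hlow N b (hB b hb)
    _ = f N (∑ b ∈ B, x b - ∑ a ∈ A, x a) := by
        rw [map_sub, map_sum, map_sum, sum_eq_zero fun a ha => hzero N a (hA a ha), sub_zero]
    _ ≤ ‖∑ b ∈ B, x b - ∑ a ∈ A, x a‖ :=
        (le_abs_self _).trans (((f N).le_of_opNorm_le (hf N) _).trans_eq (one_mul _))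

end James

lemma Set.Infinite.exists_finset_lt_le {M : Set ℕ} (hM : M.Infinite) (k : ℕ) :
    ∃ (A B : Finset ℕ) (N : ℕ), ↑A ⊆ M ∧ ↑B ⊆ M ∧ #A = k ∧ #B = k ∧
      (∀ a ∈ A, a < N) ∧ ∀ b ∈ B, N ≤ b := by
  obtain ⟨A, hAM, hA⟩ := hM.exists_subset_card_eq k
  obtain ⟨B, hBM, hB⟩ := (hM.sdiff (Set.finite_lt_nat (A.sup id + 1))).exists_subset_card_eq k
  exact ⟨A, B, A.sup id + 1, hAM, hBM.trans Set.sdiff_subset, hA, hB,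
    fun a ha => Nat.lt_succ_of_le (le_sup (f := id) ha), fun b hb => not_lt.mp (hBM hb).2⟩

lemma exists_nat_mul_rpow_lt {a s : ℝ} (b : ℝ) (ha : 0 < a) (hs : s < 1) :
    ∃ k : ℕ, b * (k : ℝ) ^ s < a * k := by
  have hlim : Tendsto (fun k : ℕ => (k : ℝ) ^ (1 - s)) atTop atTop :=
    (tendsto_rpow_atTop (sub_pos.mpr hs)).comp tendsto_natCast_atTop_atTop
  obtain ⟨k, hk, hk1⟩ := ((hlim.eventually_gt_atTop (b / a)).and (eventually_ge_atTop 1)).exists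
  have hk0 : (0 : ℝ) < k := by exact_mod_cast hk1
  refine ⟨k, ?_⟩
  calc b * (k : ℝ) ^ s < a * (k : ℝ) ^ (1 - s) * (k : ℝ) ^ s := by
        gcongr
        rwa [div_lt_iff₀' ha] at hk
    _ = a * k := by rw [mul_assoc, ← Real.rpow_add hk0, sub_add_cancel, Real.rpow_one]

lemma card_mul_le_of_hasAltBS_of_hasPropQ {X : Type*} [NormedAddCommGroup X] [NormedSpace ℝ X]
    {p q C₁ C₂ : ℝ} (hBS : HasAltBS X p C₁) (hC₁ : 0 ≤ C₁) (hp : 0 ≤ p) (hQ : HasPropQ X q C₂)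
    {x : ℕ → X} {f : ℕ → StrongDual ℝ X} {δ : ℝ} (hx : ∀ n, ‖x n‖ ≤ 1) (hf : ∀ n, ‖f n‖ ≤ 1)
    (hlow : ∀ i j, i ≤ j → δ ≤ f i (x j)) (hzero : ∀ i j, j < i → f i (x j) = 0) (k : ℕ) :
    k * δ ≤ C₂ * (C₁ * (2 * k : ℝ) ^ (1 / p)) * (k : ℝ) ^ (1 / q) := by
  obtain ⟨e, he, hLip⟩ := hBS.exists_strictMono_norm_sum_sub_sum_le hC₁ hp hx k
  obtain ⟨M, hM, hbound⟩ := hQ k (fun A => ∑ a ∈ A, x (e a)) _ (by positivity)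
    fun A B hA hB hAB => hLip A B hA hB (by exact_mod_cast hAB)
  obtain ⟨A, B, N, hAM, hBM, hA, hB, hAN, hBN⟩ := hM.exists_finset_lt_le k
  calc k * δ = #B * δ := by rw [hB]
    _ ≤ ‖∑ b ∈ B, x (e b) - ∑ a ∈ A, x (e a)‖ :=
        card_mul_le_norm_sum_sub_sum (x := x ∘ e) (f := f ∘ e) (fun n => hf _)
          (fun i j hij => hlow _ _ (he.monotone hij)) (fun i j hji => hzero _ _ (he hji)) hAN hBN
    _ ≤ _ := hbound B A hBM hAM hB hA

theorem reflexive_of_altBS_and_propQ_general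
    (X : Type*) [NormedAddCommGroup X] [NormedSpace ℝ X] [CompleteSpace X]
    (p q : ℝ) (hp : 1 < p) (hpq : p / (p - 1) < q)
    (hBS : ∃ C, 0 < C ∧ HasAltBS X p C) (hQ : ∃ C, 1 ≤ C ∧ HasPropQ X q C) :
    Function.Surjective (NormedSpace.inclusionInDoubleDual ℝ X) := by
  by_contra hJ
  obtain ⟨F, θ, hθ, hF⟩ := exists_forall_lt_norm_sub_inclusionInDoubleDual hJ
  obtain ⟨δ, hδ, x, f, hx, hf, hlow, hzero⟩ := exists_james_system F hθ hF
  obtain ⟨C₁, hC₁, hBS⟩ := hBS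
  obtain ⟨C₂, -, hQ⟩ := hQ
  have hpp : 0 < p / (p - 1) := div_pos (by linarith) (by linarith)
  have hs : 1 / p + 1 / q < 1 := by
    have := one_div_lt_one_div_of_lt hpp hpq
    rw [one_div_div, sub_div, div_self (by linarith)] at this
    linarith
  obtain ⟨k, hk⟩ := exists_nat_mul_rpow_lt (C₂ * C₁ * 2 ^ (1 / p)) hδ hs
  have hbound := card_mul_le_of_hasAltBS_of_hasPropQ hBS hC₁.le (by linarith) hQ hx hf hlow
    hzero k
  rw [Real.rpow_add' (Nat.cast_nonneg k)
    (add_pos (one_div_pos.mpr (by linarith)) (one_div_pos.mpr (hpp.trans hpq))).ne'] at hk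
  rw [Real.mul_rpow (by norm_num) (Nat.cast_nonneg k)] at hbound
  linarith

/-- Let `p, q ∈ (1,∞)` with `q > p/(p-1)`. A Banach space with the `p`-alternating
Banach–Saks property and property `𝒬_q` is reflexive (the canonical embedding into the
bidual is onto). -/
theorem reflexive_of_altBS_and_propQ
    (X : Type*) [NormedAddCommGroup X] [NormedSpace ℝ X] [CompleteSpace X]
    (p q : ℝ) (hp : 1 < p) (hq : 1 < q) (hpq : p / (p - 1) < q)
    (hBS : ∃ C, 0 < C ∧ HasAltBS X p C) (hQ : ∃ C, 1 ≤ C ∧ HasPropQ X q C) :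
    Function.Surjective (NormedSpace.inclusionInDoubleDual ℝ X) :=
  reflexive_of_altBS_and_propQ_general X p q hp hpq hBS hQ
end

section
/- In the James space $\mathcal J_p$ ($1 < p < \infty$), with $x_n = \sum_{i=1}^n e_i$, there exists $C > 0$ such that for all $k$ and all $n_1 < n_2 < \cdots < n_{2k}$, $\|\sum_{j=1}^{2k} (-1)^j x_{n_j}\|_{\mathcal J_p} \le C k^{1/p}$. -/
/-!
Write `g t = ∑ⱼ (-1)ʲ [t ≤ nⱼ]` for the coordinates of the vector. Since `n` is monotone, the
indices `j` with `t ≤ nⱼ` form a final segment, so `g t` is a difference of two partial sums of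
`∑ (-1)ʲ` and `|g t| ≤ 1`. Moreover `g` can only change across the `2k` points `nⱼ`, so in a
`p`-variation sum at most `2k` increments are nonzero, each of size at most `2`; the
`p`-variation is therefore at most `2 (2k)^{1/p}`.
-/

open Finset

lemma abs_sum_range_neg_one_pow_mul_ite_le_one (m N : ℕ) :
    |∑ j ∈ range N, (-1 : ℝ) ^ j * (if m ≤ j then 1 else 0)| ≤ 1 := by
  have hIco : ∑ j ∈ range N, (-1 : ℝ) ^ j * (if m ≤ j then 1 else 0) =
      ∑ j ∈ Ico m N, (-1 : ℝ) ^ j := by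
    simp only [mul_ite, mul_one, mul_zero, ← sum_filter]
    congr 1
    ext j
    simp only [mem_filter, mem_range, mem_Ico]
    omega
  rw [hIco]
  rcases le_total m N with hmN | hNm
  · rw [sum_Ico_eq_sub _ hmN, neg_one_geom_sum, neg_one_geom_sum]
    split_ifs <;> norm_num
  · simp [Ico_eq_empty_of_le hNm]

lemma Fin.exists_iff_le_of_monotone {N : ℕ} {q : Fin N → Prop} (hq : Monotone q) :
    ∃ m : ℕ, ∀ j : Fin N, q j ↔ m ≤ j := by
  classical
  have hex : ∃ m : ℕ, ∀ j : Fin N, m ≤ j → q j := ⟨N, fun j hj => absurd j.isLt (by omega)⟩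
  refine ⟨Nat.find hex, fun j => ⟨fun hj => Nat.find_min' hex fun j' hj' => hq hj' hj,
    Nat.find_spec hex j⟩⟩

lemma abs_sum_neg_one_pow_mul_ite_le_one {N : ℕ} {q : Fin N → Prop} [DecidablePred q]
    (hq : Monotone q) : |∑ j : Fin N, (-1 : ℝ) ^ (j : ℕ) * (if q j then 1 else 0)| ≤ 1 := by
  obtain ⟨m, hm⟩ := Fin.exists_iff_le_of_monotone hq
  simp_rw [hm]
  rw [Fin.sum_univ_eq_sum_range (fun j => (-1 : ℝ) ^ j * (if m ≤ j then 1 else 0))]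
  exact abs_sum_range_neg_one_pow_mul_ite_le_one m N

lemma StrictMono.eq_of_mem_Ico_of_mem_Ico {r : ℕ} {P : Fin (r + 1) → ℕ} (hP : StrictMono P)
    {i i' : Fin r} {t : ℕ} (ht : t ∈ Set.Ico (P i.castSucc) (P i.succ))
    (ht' : t ∈ Set.Ico (P i'.castSucc) (P i'.succ)) : i = i' := by
  by_contra hne
  wlog hlt : i < i' generalizing i i'
  · exact this ht' ht (Ne.symm hne) (lt_of_le_of_ne (not_lt.mp hlt) (Ne.symm hne))
  have : P i.succ ≤ P i'.castSucc := hP.monotone (Fin.succ_le_castSucc_iff.mpr hlt)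
  exact absurd (ht.2.trans_le (this.trans ht'.1)) (lt_irrefl t)

/-- `t ∈ J` allows a jump between `g t` and `g (t + 1)`. -/
def ChangesOnlyAt {α : Type*} (g : ℕ → α) (J : Finset ℕ) : Prop :=
  ∀ ⦃a b : ℕ⦄, a ≤ b → (∀ t ∈ J, t ∉ Set.Ico a b) → g a = g b

lemma changesOnlyAt_sum_mul_ite_le {ι : Type*} [Fintype ι] (c : ι → ℝ) (n : ι → ℕ) :
    ChangesOnlyAt (fun t => ∑ j, c j * (if t ≤ n j then 1 else 0)) (univ.image n) := by
  intro a b hab hJ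
  refine sum_congr rfl fun j _ => ?_
  have : n j ∉ Set.Ico a b := hJ (n j) (mem_image_of_mem n (mem_univ j))
  simp only [Set.mem_Ico, not_and, not_lt] at this
  by_cases ha : a ≤ n j
  · simp [ha, this ha]
  · simp [ha, show ¬ b ≤ n j by omega]

namespace ChangesOnlyAt

variable {α : Type*} {g : ℕ → α} {J : Finset ℕ} {r : ℕ} {P : Fin (r + 1) → ℕ}

lemma card_filter_ne_le [DecidableEq α] (hg : ChangesOnlyAt g J) (hP : StrictMono P) :
    #{i : Fin r | g (P i.succ) ≠ g (P i.castSucc)} ≤ #J := by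
  refine card_le_card_of_forall_subsingleton (fun i t => t ∈ Set.Ico (P i.castSucc) (P i.succ))
    (fun i hi => ?_) (fun t _ i hi i' hi' => hP.eq_of_mem_Ico_of_mem_Ico hi.2 hi'.2)
  by_contra! hnone
  exact (mem_filter.mp hi).2 (hg (hP Fin.castSucc_lt_succ).le hnone).symm

lemma sum_abs_sub_rpow_le {g : ℕ → ℝ} (hg : ChangesOnlyAt g J) (hP : StrictMono P) {D p : ℝ}
    (hD : ∀ a b, |g b - g a| ≤ D) (hp : 0 < p) :
    ∑ i : Fin r, |g (P i.succ) - g (P i.castSucc)| ^ p ≤ D ^ p * #J := by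
  classical
  have hterm : ∀ i : Fin r, |g (P i.succ) - g (P i.castSucc)| ^ p ≤
      if g (P i.succ) ≠ g (P i.castSucc) then D ^ p else 0 := fun i => by
    split_ifs with hne
    · exact Real.rpow_le_rpow (abs_nonneg _) (hD _ _) hp.le
    · simp [not_not.mp hne, Real.zero_rpow hp.ne']
  calc ∑ i : Fin r, |g (P i.succ) - g (P i.castSucc)| ^ p
      ≤ ∑ i : Fin r, if g (P i.succ) ≠ g (P i.castSucc) then D ^ p else 0 :=
        sum_le_sum fun i _ => hterm i
    _ = #{i : Fin r | g (P i.succ) ≠ g (P i.castSucc)} * D ^ p := by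
      rw [sum_ite, sum_const_zero, add_zero, sum_const, nsmul_eq_mul]
    _ ≤ D ^ p * #J := by
      rw [mul_comm]
      gcongr
      · exact Real.rpow_nonneg ((abs_nonneg _).trans (hD 0 0)) p
      · exact_mod_cast hg.card_filter_ne_le hP

lemma pVariation_le {g : ℕ → ℝ} (hg : ChangesOnlyAt g J) (hP : StrictMono P) {D p : ℝ}
    (hD : ∀ a b, |g b - g a| ≤ D) (hp : 0 < p) :
    (∑ i : Fin r, |g (P i.succ) - g (P i.castSucc)| ^ p) ^ (1 / p) ≤ D * (#J : ℝ) ^ (1 / p) := by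
  have hD0 : 0 ≤ D := (abs_nonneg _).trans (hD 0 0)
  calc (∑ i : Fin r, |g (P i.succ) - g (P i.castSucc)| ^ p) ^ (1 / p)
      ≤ (D ^ p * #J) ^ (1 / p) :=
        Real.rpow_le_rpow (sum_nonneg fun i _ => by positivity) (hg.sum_abs_sub_rpow_le hP hD hp)
          (by positivity)
    _ = D * (#J : ℝ) ^ (1 / p) := by
      rw [Real.mul_rpow (by positivity) (by positivity), one_div, Real.rpow_rpow_inv hD0 hp.ne']

end ChangesOnlyAt

/-- In the James space `𝒥_p`, with `x_n = ∑_{i=1}^n e_i`, there is `C > 0` such that for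
all `k` and all `n₁ < ⋯ < n_{2k}`, `‖∑_{j=1}^{2k} (-1)^j x_{n_j}‖_{𝒥_p} ≤ C k^{1/p}`.
The `𝒥_p`-norm is the supremum, over finite increasing tuples `P₀ < ⋯ < P_r`, of the
`p`-variation sums; here the vector `∑_j (-1)^j x_{n_j}` has `t`-th coordinate
`∑_j (-1)^j [t ≤ n_j]`. -/
theorem james_alternating_sums_upper_bound (p : ℝ) (hp : 1 < p) :
    ∃ C > (0 : ℝ), ∀ (k : ℕ) (n : Fin (2 * k) → ℕ), StrictMono n →
      ∀ (r : ℕ) (P : Fin (r + 1) → ℕ), StrictMono P →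
        (∑ i : Fin r,
            |(∑ j : Fin (2 * k), (-1 : ℝ) ^ (j : ℕ) * (if P i.succ ≤ n j then 1 else 0)) -
              (∑ j : Fin (2 * k), (-1 : ℝ) ^ (j : ℕ) *
                (if P i.castSucc ≤ n j then 1 else 0))| ^ p) ^ (1 / p) ≤
          C * (k : ℝ) ^ (1 / p) := by
  have hp0 : 0 < p := one_pos.trans hp
  refine ⟨2 * 2 ^ (1 / p), by positivity, fun k n hn r P hP => ?_⟩
  set g : ℕ → ℝ := fun t => ∑ j : Fin (2 * k), (-1 : ℝ) ^ (j : ℕ) * (if t ≤ n j then 1 else 0)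
  have hg : ∀ t, |g t| ≤ 1 := fun t =>
    abs_sum_neg_one_pow_mul_ite_le_one fun i j hij (h : t ≤ n i) => h.trans (hn.monotone hij)
  have hD : ∀ a b, |g b - g a| ≤ 2 := fun a b =>
    (abs_sub _ _).trans (by linarith [hg a, hg b])
  have hJ : (#(univ.image n) : ℝ) ≤ 2 * k := by
    exact_mod_cast card_image_le.trans (by simp)
  calc (∑ i : Fin r, |g (P i.succ) - g (P i.castSucc)| ^ p) ^ (1 / p)
      ≤ 2 * (#(univ.image n) : ℝ) ^ (1 / p) :=
        (changesOnlyAt_sum_mul_ite_le _ n).pVariation_le hP hD hp0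
    _ ≤ 2 * (2 * k : ℝ) ^ (1 / p) := by gcongr
    _ = 2 * 2 ^ (1 / p) * (k : ℝ) ^ (1 / p) := by
      rw [Real.mul_rpow (by norm_num) (by positivity), mul_assoc]
end

section
/- In the dual $\mathcal J_p^*$ of the James space, let $(e_n^*)$ be the coordinate functionals. Then for all $k$ and all $n_1 < \cdots < n_{2k}$, $\|\sum_{j=1}^{2k} (-1)^j e_{n_j}^*\|_{\mathcal J_p^*} \le k^{1/p'}$, where $p'$ is the conjugate exponent of $p$. -/
open Filter Finset

/-!
Grouping the alternating sum into consecutive pairs bounds it by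
`∑_{i<k} |x(n_{2i+1}) - x(n_{2i})|`. By Hölder's inequality against the constant sequence `1`,
this is at most `k^{1/p'}` times the `ℓ^p`-norm of these `k` increments, and that norm is at most
`1` because the increments form part of the `p`-variation sum of `x` along `n_0 < ⋯ < n_{2k-1}`.
-/

theorem Finset.sum_range_two_mul {M : Type*} [AddCommMonoid M] (f : ℕ → M) (k : ℕ) :
    ∑ j ∈ range (2 * k), f j = ∑ i ∈ range k, (f (2 * i) + f (2 * i + 1)) := by
  induction k with
  | zero => simp
  | succ k ih => rw [Nat.mul_succ, sum_range_succ, sum_range_succ, sum_range_succ, ih, add_assoc]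

theorem Finset.sum_range_two_mul_le {M : Type*} [AddCommMonoid M] [PartialOrder M]
    [IsOrderedAddMonoid M] {g : ℕ → M} (hg : ∀ i, 0 ≤ g i) (k : ℕ) :
    ∑ i ∈ range k, g (2 * i) ≤ ∑ i ∈ range (2 * k - 1), g i := by
  rw [← sum_image (f := g) (g := (2 * ·)) fun a _ b _ h => by simp only at h; omega]
  refine sum_le_sum_of_subset_of_nonneg ?_ fun i _ _ => hg i
  intro i hi
  simp only [mem_image, mem_range] at hi ⊢
  omega

theorem abs_sum_range_alternating_le (y : ℕ → ℝ) (k : ℕ) :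
    |∑ j ∈ range (2 * k), (-1 : ℝ) ^ j * y j| ≤ ∑ i ∈ range k, |y (2 * i + 1) - y (2 * i)| := by
  have hgroup : ∑ j ∈ range (2 * k), (-1 : ℝ) ^ j * y j
      = -∑ i ∈ range k, (y (2 * i + 1) - y (2 * i)) := by
    rw [sum_range_two_mul, ← sum_neg_distrib]
    refine sum_congr rfl fun i _ => ?_
    rw [pow_succ, pow_mul]
    ring
  rw [hgroup, abs_neg]
  exact abs_sum_le_sum_abs _ _

theorem Real.sum_abs_le_card_rpow_mul_rpow_sum {ι : Type*} (s : Finset ι) (f : ι → ℝ)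
    {p q : ℝ} (hpq : p.HolderConjugate q) :
    ∑ i ∈ s, |f i| ≤ (#s : ℝ) ^ (1 / q) * (∑ i ∈ s, |f i| ^ p) ^ (1 / p) := by
  have := inner_le_Lp_mul_Lq_of_nonneg s (g := fun _ => 1) hpq (fun i _ => abs_nonneg (f i))
    (fun _ _ => zero_le_one)
  simpa only [mul_one, one_rpow, sum_const, nsmul_eq_mul, mul_comm] using this

theorem sum_range_abs_sub_rpow_le_one {x : ℕ → ℝ} {p : ℝ}
    (hx : ∀ (r : ℕ) (P : Fin (r + 1) → ℕ), StrictMono P →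
      (∑ i : Fin r, |x (P i.succ) - x (P i.castSucc)| ^ p) ≤ 1)
    {m : ℕ} {N : ℕ → ℕ} (hN : StrictMonoOn N (Set.Iic m)) :
    ∑ i ∈ range m, |x (N (i + 1)) - x (N i)| ^ p ≤ 1 := by
  have hmono : StrictMono fun i : Fin (m + 1) => N i := fun a b hab =>
    hN (Set.mem_Iic.2 (Nat.lt_succ_iff.1 a.isLt)) (Set.mem_Iic.2 (Nat.lt_succ_iff.1 b.isLt)) hab
  simpa only [Fin.val_succ, Fin.val_castSucc,
    Fin.sum_univ_eq_sum_range (fun i => |x (N (i + 1)) - x (N i)| ^ p)] using hx m _ hmono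

theorem james_dual_alternating_bound_general (p p' : ℝ) (hp : 1 < p) (hpp' : 1 / p + 1 / p' = 1)
    (k : ℕ) (n : Fin (2 * k) → ℕ) (hn : StrictMono n)
    (x : ℕ → ℝ)
    (hxball : ∀ (r : ℕ) (P : Fin (r + 1) → ℕ), StrictMono P →
      (∑ i : Fin r, |x (P i.succ) - x (P i.castSucc)| ^ p) ≤ 1) :
    |∑ j : Fin (2 * k), (-1 : ℝ) ^ (j : ℕ) * x (n j)| ≤ (k : ℝ) ^ (1 / p') := by
  have hpq : p.HolderConjugate p' :=
    Real.holderConjugate_iff.mpr ⟨hp, by simpa only [one_div] using hpp'⟩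
  set N : ℕ → ℕ := fun j => if h : j < 2 * k then n ⟨j, h⟩ else 0
  have hN : ∀ j (h : j < 2 * k), N j = n ⟨j, h⟩ := fun j h => dif_pos h
  have hsum : ∑ j : Fin (2 * k), (-1 : ℝ) ^ (j : ℕ) * x (n j)
      = ∑ j ∈ range (2 * k), (-1 : ℝ) ^ j * x (N j) := by
    rw [← Fin.sum_univ_eq_sum_range]
    exact sum_congr rfl fun j _ => by rw [hN j j.isLt]
  -- `Set.Iic (2 * k - 1)` is `{0, …, 2k - 1}`, or `{0}` when `k = 0`.
  have hvar : ∑ i ∈ range (2 * k - 1), |x (N (i + 1)) - x (N i)| ^ p ≤ 1 :=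
    sum_range_abs_sub_rpow_le_one hxball fun a ha b hb hab => by
      rw [Set.mem_Iic] at ha hb
      rw [hN a (by omega), hN b (by omega)]
      exact hn hab
  have hpairs : ∑ i ∈ range k, |x (N (2 * i + 1)) - x (N (2 * i))| ^ p ≤ 1 :=
    (sum_range_two_mul_le (fun i => by positivity) k).trans hvar
  calc |∑ j : Fin (2 * k), (-1 : ℝ) ^ (j : ℕ) * x (n j)|
      ≤ ∑ i ∈ range k, |x (N (2 * i + 1)) - x (N (2 * i))| := by
        rw [hsum]; exact abs_sum_range_alternating_le _ k
    _ ≤ (k : ℝ) ^ (1 / p') * (∑ i ∈ range k, |x (N (2 * i + 1)) - x (N (2 * i))| ^ p) ^ (1 / p) := by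
        simpa only [card_range] using Real.sum_abs_le_card_rpow_mul_rpow_sum (range k) _ hpq
    _ ≤ (k : ℝ) ^ (1 / p') := mul_le_of_le_one_right (by positivity)
        (Real.rpow_le_one (sum_nonneg fun i _ => by positivity) hpairs (by positivity))

/-- In `𝒥_p^*`, `‖∑_{j=1}^{2k} (-1)^j e*_{n_j}‖ ≤ k^{1/p'}` where `1/p + 1/p' = 1`:
equivalently, for every `x` in the unit ball of the James space `𝒥_p` (i.e. `x(n) → 0`
and every `p`-variation sum of `x` is at most `1`), one has
`|∑_{j=1}^{2k} (-1)^j x(n_j)| ≤ k^{1/p'}`. -/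
theorem james_dual_alternating_bound (p p' : ℝ) (hp : 1 < p) (hpp' : 1 / p + 1 / p' = 1)
    (k : ℕ) (n : Fin (2 * k) → ℕ) (hn : StrictMono n)
    (x : ℕ → ℝ) (hx0 : Tendsto x atTop (nhds 0))
    (hxball : ∀ (r : ℕ) (P : Fin (r + 1) → ℕ), StrictMono P →
      (∑ i : Fin r, |x (P i.succ) - x (P i.castSucc)| ^ p) ≤ 1) :
    |∑ j : Fin (2 * k), (-1 : ℝ) ^ (j : ℕ) * x (n j)| ≤ (k : ℝ) ^ (1 / p') :=
  james_dual_alternating_bound_general p p' hp hpp' k n hn x hxball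
end

section
/- Let $X$ be a Banach space with separable dual $X^*$ and let $K \subseteq X^*$ be weak*-compact and nonempty. Then $K$ has a point of weak*-to-norm continuity, i.e., there exists $x^* \in K$ such that every sequence in $K$ converging to $x^*$ in the weak* topology converges to $x^*$ in norm. -/
/-!
The weak* topology on the weak*-compact set `K` is compact Hausdorff, hence Baire, and norm
closed balls of `X*` are weak*-closed. So for each `r > 0` the countably many weak*-closed sets
`K ∩ closedBall c r`, `c` ranging over a countable dense subset of `X*`, cover `K`, and by Baire
the union of their weak*-interiors is weak*-dense and open in `K`. On that union the identity
`(K, weak*) → (X*, norm)` has oscillation at most `2r`; intersecting over `r = 1/(n+1)` gives a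
residual, in particular nonempty, set of points where it is continuous.
-/

open Filter NormedSpace

open Metric Set Topology TopologicalSpace

section

variable {Y M : Type*} [TopologicalSpace Y] [PseudoMetricSpace M]

lemma eventually_dist_le_of_mem_interior_preimage_closedBall {f : Y → M} {y : Y} {c : M} {r : ℝ}
    (hy : y ∈ interior (f ⁻¹' closedBall c r)) : ∀ᶠ z in 𝓝 y, dist (f z) (f y) ≤ 2 * r := by
  filter_upwards [mem_interior_iff_mem_nhds.mp hy] with z hz
  calc dist (f z) (f y) ≤ dist (f z) c + dist (f y) c := dist_triangle_right _ _ _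
  _ ≤ r + r := add_le_add hz (interior_subset (s := f ⁻¹' closedBall c r) hy)
  _ = 2 * r := by ring

variable [BaireSpace Y] [SeparableSpace M] {f : Y → M}

lemma eventually_residual_eventually_dist_le (hf : ∀ c r, IsClosed (f ⁻¹' closedBall c r))
    {r : ℝ} (hr : 0 < r) : ∀ᶠ y in residual Y, ∀ᶠ z in 𝓝 y, dist (f z) (f y) ≤ r := by
  obtain ⟨s, hs_count, hs_dense⟩ := exists_countable_dense M
  have hcover : ⋃ c ∈ s, f ⁻¹' closedBall c (r / 2) = univ := by
    refine eq_univ_of_forall fun y => ?_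
    obtain ⟨c, hcs, hc⟩ := hs_dense.exists_dist_lt (f y) (half_pos hr)
    exact mem_biUnion hcs (mem_closedBall.mpr hc.le)
  filter_upwards [residual_of_dense_open (isOpen_biUnion fun _ _ => isOpen_interior)
    (dense_biUnion_interior_of_closed (fun c _ => hf c (r / 2)) hs_count hcover)] with y hy
  obtain ⟨c, -, hyc⟩ := mem_iUnion₂.mp hy
  simpa only [mul_div_cancel₀ r two_ne_zero] using
    eventually_dist_le_of_mem_interior_preimage_closedBall hyc

lemma eventually_residual_continuousAt (hf : ∀ c r, IsClosed (f ⁻¹' closedBall c r)) :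
    ∀ᶠ y in residual Y, ContinuousAt f y := by
  have hosc : ∀ n : ℕ, ∀ᶠ y in residual Y, ∀ᶠ z in 𝓝 y, dist (f z) (f y) ≤ 1 / (n + 1) :=
    fun n => eventually_residual_eventually_dist_le hf Nat.one_div_pos_of_nat
  filter_upwards [eventually_countable_forall.mpr hosc] with y hy
  refine Metric.tendsto_nhds.mpr fun ε hε => ?_
  obtain ⟨n, hn⟩ := exists_nat_one_div_lt hε
  exact (hy n).mono fun z hz => hz.trans_lt hn

lemma exists_continuousAt_of_isClosed_preimage_closedBall [Nonempty Y]
    (hf : ∀ c r, IsClosed (f ⁻¹' closedBall c r)) : ∃ y, ContinuousAt f y :=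
  (dense_of_mem_residual (eventually_residual_continuousAt hf)).nonempty

end

theorem exists_point_of_weakStar_to_norm_continuity_general
    (X : Type*) [NormedAddCommGroup X] [NormedSpace ℝ X]
    [TopologicalSpace.SeparableSpace (StrongDual ℝ X)]
    (K : Set (StrongDual ℝ X)) (hKne : K.Nonempty)
    (hK : IsCompact (StrongDual.toWeakDual '' K)) :
    ∃ φ ∈ K, ∀ ψ : ℕ → StrongDual ℝ X, (∀ n, ψ n ∈ K) →
      (∀ v : X, Tendsto (fun n => ψ n v) atTop (nhds (φ v))) →
      Tendsto (fun n => ‖ψ n - φ‖) atTop (nhds 0) := by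
  set W := StrongDual.toWeakDual '' K
  have : CompactSpace W := isCompact_iff_compactSpace.mp hK
  have : Nonempty W := (hKne.image _).to_subtype
  obtain ⟨⟨_, φ, hφK, rfl⟩, hφ⟩ := exists_continuousAt_of_isClosed_preimage_closedBall
    (f := fun w : W => WeakDual.toStrongDual (w : WeakDual ℝ X))
    fun c r => (WeakDual.isClosed_closedBall c r).preimage continuous_subtype_val
  refine ⟨φ, hφK, fun ψ hψK hψ => ?_⟩
  have hweak : Tendsto (fun n => (⟨_, mem_image_of_mem _ (hψK n)⟩ : W)) atTop
      (𝓝 ⟨_, mem_image_of_mem _ hφK⟩) :=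
    tendsto_subtype_rng.mpr (tendsto_iff_forall_eval_tendsto_topDualPairing.mpr hψ)
  exact tendsto_iff_norm_sub_tendsto_zero.mp (hφ.tendsto.comp hweak)

/-- Let `X` be a Banach space with separable dual and `K ⊆ X*` nonempty and weak*-compact.
Then `K` has a point of weak*-to-norm continuity: some `φ ∈ K` such that every sequence in
`K` converging to `φ` in the weak* topology converges to `φ` in norm. -/
theorem exists_point_of_weakStar_to_norm_continuity
    (X : Type*) [NormedAddCommGroup X] [NormedSpace ℝ X] [CompleteSpace X]
    [TopologicalSpace.SeparableSpace (StrongDual ℝ X)]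
    (K : Set (StrongDual ℝ X)) (hKne : K.Nonempty)
    (hK : IsCompact (StrongDual.toWeakDual '' K)) :
    ∃ φ ∈ K, ∀ ψ : ℕ → StrongDual ℝ X, (∀ n, ψ n ∈ K) →
      (∀ v : X, Tendsto (fun n => ψ n v) atTop (nhds (φ v))) →
      Tendsto (fun n => ‖ψ n - φ‖) atTop (nhds 0) :=
  exists_point_of_weakStar_to_norm_continuity_general X K hKne hK
end

section
/- There is no bounded map $f : B_{c_0} \to Y^*$, with $Y^*$ a separable dual Banach space, such that $f$ is weak-to-weak* sequentially continuous, injective, and $f^{-1}$ is uniformly continuous. -/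
/-!
The weak-* closure `K` of `f(B_{c₀})` is weak-* compact (Banach–Alaoglu) and is covered by
countably many norm balls of radius `δ/2` centred at a dense sequence of the separable dual. These
balls are weak-* closed, so by Baire one of them contains a nonempty relatively weak-* open piece
`K ∩ U`; pick `x` with `f x ∈ U`. The points `(x + eₙ) / ‖x + eₙ‖` of the ball converge weakly to
`x`, so their images eventually lie in `U`, within `δ` of `f x`, while they stay at distance
almost `1` from `x`: this contradicts the uniform continuity of `f⁻¹` at scale `1/2`.
-/

open Filter NormedSpace

/-- The closed unit ball of `c₀`, realized inside `ℓ_∞`. -/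
def BallC0 : Set (lp (fun _ : ℕ => ℝ) ⊤) :=
  {x | Tendsto (fun n : ℕ => (x : ∀ _ : ℕ, ℝ) n) atTop (nhds 0) ∧ ‖x‖ ≤ 1}

open scoped lp ENNReal Topology

namespace WeakDual

open Metric Bornology TopologicalSpace

variable {𝕜 E : Type*} [NontriviallyNormedField 𝕜] [SeminormedAddCommGroup E] [NormedSpace 𝕜 E]
  [SeparableSpace (StrongDual 𝕜 E)]

theorem exists_isOpen_inter_subset_closedBall_of_isCompact {K : Set (WeakDual 𝕜 E)}
    (hK : IsCompact K) (hne : K.Nonempty) {r : ℝ} (hr : 0 < r) :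
    ∃ U : Set (WeakDual 𝕜 E), IsOpen U ∧ (K ∩ U).Nonempty ∧
      ∃ c : StrongDual 𝕜 E, K ∩ U ⊆ toStrongDual ⁻¹' closedBall c r := by
  have : CompactSpace K := isCompact_iff_compactSpace.mp hK
  have : Nonempty K := hne.to_subtype
  have : Nonempty (StrongDual 𝕜 E) := ⟨0⟩
  set c := denseSeq (StrongDual 𝕜 E)
  set C : ℕ → Set K := fun j => Subtype.val ⁻¹' (toStrongDual ⁻¹' closedBall (c j) r)
  have hC : ⋃ j, C j = Set.univ := by
    refine Set.iUnion_eq_univ_iff.mpr fun z => ?_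
    obtain ⟨j, hj⟩ := (denseRange_denseSeq _).exists_dist_lt (toStrongDual z.1) hr
    exact ⟨j, mem_closedBall.mpr hj.le⟩
  -- `K` is compact Hausdorff, hence a Baire space.
  obtain ⟨j, z, hz⟩ := nonempty_interior_of_iUnion_of_closed
    (fun j => (isClosed_closedBall (c j) r).preimage continuous_subtype_val) hC
  obtain ⟨U, hU, hUC⟩ := isOpen_induced_iff.mp (isOpen_interior (s := C j))
  refine ⟨U, hU, ⟨z, z.2, ?_⟩, c j, fun w hw => ?_⟩
  · rw [← hUC] at hz
    exact hz
  · have hwC : (⟨w, hw.1⟩ : K) ∈ interior (C j) := by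
      rw [← hUC]
      exact hw.2
    exact (interior_subset hwC : (⟨w, hw.1⟩ : K) ∈ C j)

theorem exists_isOpen_inter_nonempty_norm_sub_le_of_isBounded [ProperSpace 𝕜]
    {s : Set (WeakDual 𝕜 E)} (hb : IsBounded s) (hne : s.Nonempty) {ε : ℝ} (hε : 0 < ε) :
    ∃ U : Set (WeakDual 𝕜 E), IsOpen U ∧ (s ∩ U).Nonempty ∧
      ∀ z ∈ s ∩ U, ∀ w ∈ s ∩ U, ‖toStrongDual z - toStrongDual w‖ ≤ ε := by
  obtain ⟨U, hU, ⟨z, hzs, hzU⟩, c, hUc⟩ := exists_isOpen_inter_subset_closedBall_of_isCompact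
    (isCompact_of_bounded_of_closed (isBounded_closure hb) isClosed_closure)
    hne.closure (half_pos hε)
  refine ⟨U, hU, Set.inter_comm U s ▸ _root_.mem_closure_iff.mp hzs U hU hzU, fun z hz w hw => ?_⟩
  have hz' := hUc ⟨subset_closure hz.1, hz.2⟩
  have hw' := hUc ⟨subset_closure hw.1, hw.2⟩
  rw [Set.mem_preimage, mem_closedBall_iff_norm] at hz' hw'
  calc ‖toStrongDual z - toStrongDual w‖
      = ‖(toStrongDual z - c) - (toStrongDual w - c)‖ := by rw [sub_sub_sub_cancel_right]
    _ ≤ ε / 2 + ε / 2 := (norm_sub_le _ _).trans (add_le_add hz' hw')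
    _ = ε := add_halves ε

end WeakDual

theorem lp.summable_norm_of_one {ι : Type*} (a : ℓ¹(ι, ℝ)) : Summable fun i => ‖a i‖ := by
  simpa using (lp.memℓp a).summable (p := 1) (by norm_num)

theorem lp.summable_mul_of_one_of_top {ι : Type*} (a : ℓ¹(ι, ℝ)) (x : ℓ^∞(ι, ℝ)) :
    Summable fun i => a i * x i := by
  refine Summable.of_norm_bounded ((lp.summable_norm_of_one a).mul_right ‖x‖) fun i => ?_
  rw [norm_mul]
  exact mul_le_mul_of_nonneg_left (lp.norm_apply_le_norm ENNReal.top_ne_zero x i) (norm_nonneg _)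

theorem zero_mem_ballC0 : (0 : ℓ^∞(ℕ, ℝ)) ∈ BallC0 :=
  ⟨tendsto_const_nhds, norm_zero.trans_le zero_le_one⟩

noncomputable def unitVec (n : ℕ) : ℓ^∞(ℕ, ℝ) := lp.single ∞ n 1

theorem unitVec_apply_self (n : ℕ) : unitVec n n = 1 := lp.single_apply_self ∞ n 1

theorem unitVec_apply_of_ne {i n : ℕ} (h : i ≠ n) : unitVec n i = 0 := lp.single_apply_ne ∞ n 1 h

theorem add_unitVec_apply (x : ℓ^∞(ℕ, ℝ)) (n i : ℕ) : (x + unitVec n) i = x i + unitVec n i := rfl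

theorem tsum_mul_unitVec (a : ℕ → ℝ) (n : ℕ) : ∑' i, a i * unitVec n i = a n := by
  rw [tsum_eq_single n fun i hi => by rw [unitVec_apply_of_ne hi, mul_zero], unitVec_apply_self,
    mul_one]

theorem tendsto_add_unitVec_apply_atTop {x : ℓ^∞(ℕ, ℝ)} (hx : Tendsto (fun i => x i) atTop (𝓝 0))
    (n : ℕ) : Tendsto (fun i => (x + unitVec n) i) atTop (𝓝 0) := by
  refine hx.congr' ?_
  filter_upwards [eventually_gt_atTop n] with i hi
  rw [add_unitVec_apply, unitVec_apply_of_ne hi.ne', add_zero]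

theorem norm_add_unitVec_le {x : ℓ^∞(ℕ, ℝ)} (hx : ‖x‖ ≤ 1) (n : ℕ) :
    ‖x + unitVec n‖ ≤ max 1 |x n + 1| := by
  refine lp.norm_le_of_forall_le (zero_le_one.trans (le_max_left _ _)) fun i => ?_
  rw [add_unitVec_apply]
  rcases eq_or_ne i n with rfl | hi
  · rw [unitVec_apply_self, Real.norm_eq_abs]
    exact le_max_right _ _
  · rw [unitVec_apply_of_ne hi, add_zero]
    exact ((lp.norm_apply_le_norm ENNReal.top_ne_zero x i).trans hx).trans (le_max_left _ _)

theorem abs_add_one_le_norm_add_unitVec (x : ℓ^∞(ℕ, ℝ)) (n : ℕ) :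
    |x n + 1| ≤ ‖x + unitVec n‖ := by
  have := lp.norm_apply_le_norm ENNReal.top_ne_zero (x + unitVec n) n
  rwa [add_unitVec_apply, unitVec_apply_self, Real.norm_eq_abs] at this

theorem tendsto_norm_add_unitVec {x : ℓ^∞(ℕ, ℝ)} (hx : x ∈ BallC0) :
    Tendsto (fun n => ‖x + unitVec n‖) atTop (𝓝 1) := by
  have h : Tendsto (fun n => |x n + 1|) atTop (𝓝 1) := by
    simpa using (hx.1.add_const 1).abs
  refine tendsto_of_tendsto_of_tendsto_of_le_of_le h ?_ (abs_add_one_le_norm_add_unitVec x)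
    (norm_add_unitVec_le hx.2)
  simpa using (tendsto_const_nhds (x := (1 : ℝ))).max h

noncomputable def normalizedAddUnitVec (x : ℓ^∞(ℕ, ℝ)) (n : ℕ) : ℓ^∞(ℕ, ℝ) :=
  ‖x + unitVec n‖⁻¹ • (x + unitVec n)

theorem normalizedAddUnitVec_apply (x : ℓ^∞(ℕ, ℝ)) (n i : ℕ) :
    normalizedAddUnitVec x n i = ‖x + unitVec n‖⁻¹ * (x + unitVec n) i :=
  rfl

theorem normalizedAddUnitVec_mem_ballC0 {x : ℓ^∞(ℕ, ℝ)} (hx : x ∈ BallC0) (n : ℕ) :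
    normalizedAddUnitVec x n ∈ BallC0 := by
  refine ⟨?_, ?_⟩
  · simpa only [normalizedAddUnitVec_apply, mul_zero] using
      (tendsto_add_unitVec_apply_atTop hx.1 n).const_mul ‖x + unitVec n‖⁻¹
  · rw [normalizedAddUnitVec, norm_smul, norm_inv, norm_norm]
    exact inv_mul_le_one

theorem tendsto_tsum_mul_normalizedAddUnitVec {x : ℓ^∞(ℕ, ℝ)} (hx : x ∈ BallC0) (a : ℓ¹(ℕ, ℝ)) :
    Tendsto (fun n => ∑' i, a i * normalizedAddUnitVec x n i) atTop (𝓝 (∑' i, a i * x i)) := by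
  have hpair : ∀ n, ∑' i, a i * normalizedAddUnitVec x n i
      = ‖x + unitVec n‖⁻¹ * (∑' i, a i * x i + a n) := by
    intro n
    have h : ∀ i, a i * normalizedAddUnitVec x n i
        = ‖x + unitVec n‖⁻¹ * (a i * x i + a i * unitVec n i) := fun i => by
      rw [normalizedAddUnitVec_apply, add_unitVec_apply]; ring
    rw [tsum_congr h, tsum_mul_left, (lp.summable_mul_of_one_of_top a x).tsum_add
      (lp.summable_mul_of_one_of_top a (unitVec n)), tsum_mul_unitVec]
  have ha : Tendsto (fun n => a n) atTop (𝓝 0) :=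
    tendsto_zero_iff_norm_tendsto_zero.mpr (lp.summable_norm_of_one a).tendsto_atTop_zero
  simpa [hpair] using ((tendsto_norm_add_unitVec hx).inv₀ one_ne_zero).mul (ha.const_add _)

theorem eventually_lt_norm_normalizedAddUnitVec_sub {x : ℓ^∞(ℕ, ℝ)} (hx : x ∈ BallC0) {r : ℝ}
    (hr : r < 1) : ∀ᶠ n in atTop, r < ‖normalizedAddUnitVec x n - x‖ := by
  have h : Tendsto (fun n => (normalizedAddUnitVec x n - x) n) atTop (𝓝 1) := by
    simp_rw [lp.coeFn_sub, Pi.sub_apply, normalizedAddUnitVec_apply, add_unitVec_apply,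
      unitVec_apply_self]
    simpa using (((tendsto_norm_add_unitVec hx).inv₀ one_ne_zero).mul (hx.1.add_const 1)).sub hx.1
  filter_upwards [h.eventually (eventually_gt_nhds hr)] with n hn
  exact hn.trans_le ((le_abs_self _).trans
    (lp.norm_apply_le_norm ENNReal.top_ne_zero (normalizedAddUnitVec x n - x) n))

theorem no_weakly_continuous_embedding_of_c0_ball_general
    (Y : Type*) [NormedAddCommGroup Y] [NormedSpace ℝ Y]
    [TopologicalSpace.SeparableSpace (StrongDual ℝ Y)]
    (f : lp (fun _ : ℕ => ℝ) ⊤ → StrongDual ℝ Y)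
    (hbdd : ∃ R : ℝ, ∀ x ∈ BallC0, ‖f x‖ ≤ R)
    (hcont : ∀ x ∈ BallC0, ∀ u : ℕ → lp (fun _ : ℕ => ℝ) ⊤, (∀ n, u n ∈ BallC0) →
      (∀ a : lp (fun _ : ℕ => ℝ) 1,
        Tendsto (fun n => ∑' i : ℕ, (a : ∀ _ : ℕ, ℝ) i * (u n : ∀ _ : ℕ, ℝ) i)
          atTop (nhds (∑' i : ℕ, (a : ∀ _ : ℕ, ℝ) i * (x : ∀ _ : ℕ, ℝ) i))) →
      ∀ y : Y, Tendsto (fun n => f (u n) y) atTop (nhds (f x y)))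
    (hunif : ∀ ε > (0 : ℝ), ∃ δ > (0 : ℝ), ∀ x ∈ BallC0, ∀ y ∈ BallC0,
      ‖f x - f y‖ ≤ δ → ‖x - y‖ ≤ ε) :
    False := by
  obtain ⟨δ, hδ, hfδ⟩ := hunif (1 / 2) one_half_pos
  set S := (fun x => StrongDual.toWeakDual (f x)) '' BallC0
  have hSb : Bornology.IsBounded S := by
    obtain ⟨R, hR⟩ := hbdd
    refine (Metric.isBounded_iff_subset_closedBall (0 : StrongDual ℝ Y)).mpr ⟨R, ?_⟩
    rintro _ ⟨x, hx, rfl⟩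
    exact mem_closedBall_zero_iff.mpr (hR x hx)
  obtain ⟨U, hU, ⟨_, ⟨x, hx, rfl⟩, hxU⟩, hSU⟩ :=
    WeakDual.exists_isOpen_inter_nonempty_norm_sub_le_of_isBounded hSb
      ((Set.nonempty_of_mem zero_mem_ballC0).image _) hδ
  set u := normalizedAddUnitVec x
  have hu : ∀ n, u n ∈ BallC0 := normalizedAddUnitVec_mem_ballC0 hx
  have hfu : Tendsto (fun n => StrongDual.toWeakDual (f (u n))) atTop
      (𝓝 (StrongDual.toWeakDual (f x))) :=
    tendsto_iff_forall_eval_tendsto_topDualPairing.mpr <|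
      hcont x hx u hu (tendsto_tsum_mul_normalizedAddUnitVec hx)
  obtain ⟨n, hnU, hn⟩ := ((hfu.eventually_mem (hU.mem_nhds hxU)).and
    (eventually_lt_norm_normalizedAddUnitVec_sub hx one_half_lt_one)).exists
  exact hn.not_ge <| hfδ _ (hu n) x hx <| hSU _ ⟨⟨u n, hu n, rfl⟩, hnU⟩ _ ⟨⟨x, hx, rfl⟩, hxU⟩

/-- There is no bounded map `f : B_{c₀} → Y*` into a separable dual which is
weak-to-weak* sequentially continuous (weak convergence in `c₀` being tested against
`ℓ₁`), injective, and has uniformly continuous inverse. -/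
theorem no_weakly_continuous_embedding_of_c0_ball
    (Y : Type*) [NormedAddCommGroup Y] [NormedSpace ℝ Y] [CompleteSpace Y]
    [TopologicalSpace.SeparableSpace (StrongDual ℝ Y)]
    (f : lp (fun _ : ℕ => ℝ) ⊤ → StrongDual ℝ Y)
    (hbdd : ∃ R : ℝ, ∀ x ∈ BallC0, ‖f x‖ ≤ R)
    (hcont : ∀ x ∈ BallC0, ∀ u : ℕ → lp (fun _ : ℕ => ℝ) ⊤, (∀ n, u n ∈ BallC0) →
      (∀ a : lp (fun _ : ℕ => ℝ) 1,
        Tendsto (fun n => ∑' i : ℕ, (a : ∀ _ : ℕ, ℝ) i * (u n : ∀ _ : ℕ, ℝ) i)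
          atTop (nhds (∑' i : ℕ, (a : ∀ _ : ℕ, ℝ) i * (x : ∀ _ : ℕ, ℝ) i))) →
      ∀ y : Y, Tendsto (fun n => f (u n) y) atTop (nhds (f x y)))
    (hinj : ∀ x ∈ BallC0, ∀ y ∈ BallC0, f x = f y → x = y)
    (hunif : ∀ ε > (0 : ℝ), ∃ δ > (0 : ℝ), ∀ x ∈ BallC0, ∀ y ∈ BallC0,
      ‖f x - f y‖ ≤ δ → ‖x - y‖ ≤ ε) :
    False :=
  no_weakly_continuous_embedding_of_c0_ball_general Y f hbdd hcont hunif
end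

section
/- For $k \in \mathbb N$, let $\widetilde{M_k} = \{\sum_{i=1}^j s_{n_i} + \ell \mathbf 1 : j, \ell \ge 0,\ j + \ell \le k,\ n_1 < \cdots < n_j\} \subseteq \ell_\infty$, where $s_n = \sum_{i=1}^n e_i$ and $\mathbf 1$ is the constant-one sequence. Then for each $d \in \{1, \ldots, k\}$, the $d$-th Cantor–Bendixson derived set of $(\widetilde{M_k}, w^*)$ is $\widetilde{M_k}^{(d)} = \{\sum_{i=1}^j s_{n_i} + \ell \mathbf 1 : \ell \ge d,\ j + \ell \le k\}$; in particular, the Cantor–Bendixson index of $\widetilde{M_k}$ equals $k+1$. -/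
/-- The derived set (set of accumulation points) of a set in a topological space. -/
def der {α : Type*} [TopologicalSpace α] (s : Set α) : Set α :=
  {x | x ∈ closure (s \ {x})}

/-- The element `∑_{i=1}^j s_{n_i} + ℓ·𝟙` of `ℓ_∞`, where `s_n = e_0 + ⋯ + e_n` is the
summing basis and `A = {n₁ < ⋯ < n_j}`; its `i`-th coordinate is `#{n ∈ A : i ≤ n} + ℓ`. -/
noncomputable def elt (A : Finset ℕ) (l : ℕ) : ℕ → ℝ :=
  fun i => (((A.filter fun n => i ≤ n).card + l : ℕ) : ℝ)

/-- `M̃_k = {∑ s_{n_i} + ℓ𝟙 : j + ℓ ≤ k}`, viewed inside `ℕ → ℝ` with the topology of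
pointwise convergence — which coincides with the weak* topology of `ℓ_∞ = (ℓ₁)*` on this
bounded set. -/
def Mk (k : ℕ) : Set (ℕ → ℝ) := {u | ∃ (A : Finset ℕ) (l : ℕ), A.card + l ≤ k ∧ u = elt A l}

namespace CBaux

def F (A : Finset ℕ) (i : ℕ) : ℕ := (A.filter fun n => i ≤ n).card

lemma elt_apply (A : Finset ℕ) (l i : ℕ) : elt A l i = ((F A i + l : ℕ) : ℝ) := rfl

lemma F_zero (A : Finset ℕ) : F A 0 = A.card := by
  unfold F
  rw [Finset.filter_true_of_mem]
  intro n _; exact Nat.zero_le n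

lemma F_step (A : Finset ℕ) (i : ℕ) :
    F A i = F A (i + 1) + (if i ∈ A then 1 else 0) := by
  unfold F
  have h : (A.filter fun n => i ≤ n) =
      (A.filter fun n => i + 1 ≤ n) ∪ (A.filter fun n => n = i) := by
    rw [← Finset.filter_or]
    apply Finset.filter_congr
    intro n _
    constructor
    · intro h; omega
    · intro h; omega
  rw [h, Finset.card_union_of_disjoint, Finset.filter_eq']
  · split <;> simp
  · rw [Finset.disjoint_left]
    intro n h1 h2
    rw [Finset.mem_filter] at h1 h2
    omega

lemma F_eq_zero_iff (A : Finset ℕ) (i : ℕ) : F A i = 0 ↔ ∀ n ∈ A, n < i := by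
  unfold F
  rw [Finset.card_eq_zero, Finset.filter_eq_empty_iff]
  constructor
  · intro h n hn; have := h hn; omega
  · intro h n hn; have := h n hn; omega

lemma F_le (A : Finset ℕ) (i : ℕ) : F A i ≤ A.card :=
  Finset.card_filter_le _ _

lemma F_insert_of_le {x : ℕ} {A : Finset ℕ} (hx : x ∉ A) {i : ℕ} (hi : i ≤ x) :
    F (insert x A) i = F A i + 1 := by
  unfold F
  rw [Finset.filter_insert, if_pos hi, Finset.card_insert_of_notMem]
  simp [hx]

lemma nat_eq_of_dist_lt_one {a b : ℕ} (h : |(a : ℝ) - b| < 1) : a = b := by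
  have h1 := abs_lt.1 h
  have h2 : (a : ℝ) < b + 1 := by linarith [h1.2]
  have h3 : (b : ℝ) < a + 1 := by linarith [h1.1]
  have h2' : a < b + 1 := by exact_mod_cast h2
  have h3' : b < a + 1 := by exact_mod_cast h3
  omega

def SS (k d : ℕ) : Set (ℕ → ℝ) :=
  {u | ∃ (A : Finset ℕ) (l : ℕ), d ≤ l ∧ A.card + l ≤ k ∧ u = elt A l}


lemma mem_der_of_mem_succ {k d : ℕ} {A : Finset ℕ} {l : ℕ} (hdl : d + 1 ≤ l)
    (hk : A.card + l ≤ k) : elt A l ∈ der (SS k d) := by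
  simp only [der, Set.mem_setOf_eq]
  obtain ⟨M, hM⟩ : ∃ M, ∀ n ∈ A, n < M :=
    ⟨A.sup id + 1, fun n hn => Nat.lt_succ_of_le (Finset.le_sup (f := id) hn)⟩
  set seq : ℕ → (ℕ → ℝ) := fun m => elt (insert (M + m) A) (l - 1) with hseq
  have hnotmem : ∀ m : ℕ, M + m ∉ A := fun m hmem => by have := hM _ hmem; omega
  have hmem : ∀ m, seq m ∈ SS k d \ {elt A l} := by
    intro m
    constructor
    · refine ⟨insert (M + m) A, l - 1, by omega, ?_, rfl⟩
      rw [Finset.card_insert_of_notMem (hnotmem m)]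
      omega
    · intro hEq
      simp only [Set.mem_singleton_iff] at hEq
      have h1 : elt (insert (M + m) A) (l - 1) (M + m + 1) = elt A l (M + m + 1) :=
        congrFun hEq (M + m + 1)
      rw [elt_apply, elt_apply] at h1
      have h1' : F (insert (M + m) A) (M + m + 1) + (l - 1) = F A (M + m + 1) + l := by
        exact_mod_cast h1
      have h2 : F (insert (M + m) A) (M + m + 1) = 0 := by
        rw [F_eq_zero_iff]
        intro n hn
        rcases Finset.mem_insert.1 hn with h | h
        · omega
        · have := hM n h; omega
      have h3 : F A (M + m + 1) = 0 := by
        rw [F_eq_zero_iff]; intro n hn; have := hM n hn; omega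
      omega
  have htend : Filter.Tendsto seq Filter.atTop (nhds (elt A l)) := by
    rw [tendsto_pi_nhds]
    intro i
    apply Filter.Tendsto.congr' (f₁ := fun _ => elt A l i) _ tendsto_const_nhds
    rw [Filter.eventuallyEq_iff_exists_mem]
    refine ⟨{m | i ≤ m}, Filter.mem_atTop i, ?_⟩
    intro m hm
    simp only [Set.mem_setOf_eq] at hm
    show elt A l i = seq m i
    rw [hseq]
    simp only
    rw [elt_apply, elt_apply, F_insert_of_le (hnotmem m) (by omega)]
    congr 1
    omega
  exact mem_closure_of_tendsto htend (Filter.Eventually.of_forall hmem)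


lemma der_subset_succ {k d : ℕ} : der (SS k d) ⊆ SS k (d + 1) := by
  intro u hu
  simp only [der, Set.mem_setOf_eq] at hu
  -- Step 1: approximation families from closure membership
  have H : ∀ (N : ℕ) (ε : ℝ), 0 < ε → ∃ (A : Finset ℕ) (l : ℕ),
      d ≤ l ∧ A.card + l ≤ k ∧ elt A l ≠ u ∧ ∀ i ≤ N, |elt A l i - u i| < ε := by
    intro N ε hε
    have hU : {v : ℕ → ℝ | ∀ i ≤ N, |v i - u i| < ε} ∈ nhds u := by
      have hEq : {v : ℕ → ℝ | ∀ i ≤ N, |v i - u i| < ε} =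
          ⋂ i ∈ Finset.range (N + 1), (fun v : ℕ → ℝ => v i) ⁻¹' Metric.ball (u i) ε := by
        ext v
        simp [Real.dist_eq, Nat.lt_succ_iff]
      rw [hEq]
      refine (Filter.biInter_finset_mem _).2 fun i _ => ?_
      exact (continuous_apply i).continuousAt.preimage_mem_nhds (Metric.ball_mem_nhds _ hε)
    obtain ⟨v, hv1, hv2⟩ := mem_closure_iff_nhds.1 hu _ hU
    obtain ⟨⟨A, l, h1, h2, rfl⟩, hne⟩ := hv2
    exact ⟨A, l, h1, h2, fun h => hne (by simp [h]), hv1⟩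
  have H4 : ∀ N : ℕ, ∃ (A : Finset ℕ) (l : ℕ),
      d ≤ l ∧ A.card + l ≤ k ∧ elt A l ≠ u ∧ ∀ i ≤ N, |elt A l i - u i| < 1/4 :=
    fun N => H N (1/4) (by norm_num)
  choose B L hBd hBk hBne hBapp using H4
  set f : ℕ → ℕ := fun i => F (B i) i + L i with hf
  -- Step 2: u is integer valued, with values f
  have hBval : ∀ i, elt (B i) (L i) i = (f i : ℝ) := fun i => elt_apply _ _ _
  have hfu : ∀ i, u i = (f i : ℝ) := by
    intro i
    by_contra hne
    have hpos : 0 < |u i - (f i : ℝ)| := abs_pos.2 (sub_ne_zero.2 hne)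
    set ε := min (|u i - (f i : ℝ)|) (1/4) with hε
    obtain ⟨C, m, _, _, _, happ⟩ := H i ε (lt_min hpos (by norm_num))
    have h1 : |elt C m i - u i| < ε := happ i le_rfl
    have h1' : |elt C m i - u i| < 1/4 := lt_of_lt_of_le h1 (min_le_right _ _)
    have h2 : |elt (B i) (L i) i - u i| < 1/4 := hBapp i i le_rfl
    have h3 : |((F C i + m : ℕ) : ℝ) - ((f i : ℕ) : ℝ)| < 1 := by
      rw [elt_apply] at h1'
      rw [hBval i] at h2
      calc |((F C i + m : ℕ) : ℝ) - ((f i : ℕ) : ℝ)|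
          ≤ |((F C i + m : ℕ) : ℝ) - u i| + |u i - ((f i : ℕ) : ℝ)| := abs_sub_le _ _ _
        _ < 1 := by rw [abs_sub_comm] at h2; linarith
    have h4 : F C i + m = f i := nat_eq_of_dist_lt_one h3
    have h5 : |u i - (f i : ℝ)| < ε := by
      rw [← h4]
      push_cast
      rw [abs_sub_comm]
      rw [elt_apply] at h1
      calc |(↑(F C i) + ↑m : ℝ) - u i| = |((F C i + m : ℕ) : ℝ) - u i| := by push_cast; ring_nf
        _ < ε := h1
    exact absurd h5 (not_lt.2 (min_le_left _ _))
  -- agreement of window parameters with f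
  have hagree : ∀ N i, i ≤ N → F (B N) i + L N = f i := by
    intro N i hiN
    have h2 := hBapp N i hiN
    rw [hfu i, elt_apply] at h2
    refine nat_eq_of_dist_lt_one ?_
    calc |((F (B N) i + L N : ℕ) : ℝ) - ((f i : ℕ) : ℝ)| < 1/4 := h2
      _ < 1 := by norm_num
  -- step structure of f
  have hstep : ∀ i, f i = f (i + 1) + (if i ∈ B (i + 1) then 1 else 0) := by
    intro i
    rw [← hagree (i + 1) i (Nat.le_succ i), ← hagree (i + 1) (i + 1) le_rfl,
      F_step (B (i + 1)) i]
    omega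
  have hanti : Antitone f := by
    refine antitone_nat_of_succ_le fun n => ?_
    have := hstep n
    by_cases h : n ∈ B (n + 1) <;> simp [h] at this <;> omega
  -- stabilization
  obtain ⟨Nstar, hNs⟩ : ∃ n, f n = sInf (Set.range f) :=
    Nat.sInf_mem (Set.range_nonempty f)
  have hconst : ∀ n, Nstar ≤ n → f n = f Nstar := fun n h =>
    le_antisymm (hanti h) (hNs ▸ Nat.sInf_le ⟨n, rfl⟩)
  set lstar := f Nstar with hlstar
  set Astar := (Finset.range Nstar).filter (fun i => f (i + 1) < f i) with hAstar
  have hAmem : ∀ i, i ∈ Astar ↔ (i < Nstar ∧ f i = f (i + 1) + 1) := by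
    intro i
    rw [hAstar, Finset.mem_filter, Finset.mem_range]
    have := hstep i
    by_cases h : i ∈ B (i + 1) <;> simp [h] at this <;> constructor <;> intro hh <;>
      exact ⟨hh.1, by omega⟩
  have hAlt : ∀ n ∈ Astar, n < Nstar := by
    intro n hn; exact ((hAmem n).1 hn).1
  -- reconstruction: f = F Astar + lstar
  have hkey : ∀ m i, i + m = Nstar → f i = F Astar i + lstar := by
    intro m
    induction m with
    | zero =>
      intro i hi
      have : i = Nstar := by omega
      subst this
      rw [(F_eq_zero_iff Astar i).2 hAlt]
      omega
    | succ m ih =>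
      intro i hi
      have h1 := ih (i + 1) (by omega)
      have hs := hstep i
      have hFs := F_step Astar i
      have hilt : i < Nstar := by omega
      by_cases hb : i ∈ B (i + 1)
      · have hfi : f i = f (i + 1) + 1 := by simp [hb] at hs; omega
        have hmem : i ∈ Astar := (hAmem i).2 ⟨hilt, hfi⟩
        simp only [hmem, if_true] at hFs
        omega
      · have hfi : f i = f (i + 1) := by simp [hb] at hs; omega
        have hmem : i ∉ Astar := by
          intro h
          have := ((hAmem i).1 h).2
          omega
        simp only [hmem, if_false] at hFs
        omega
  have hall : ∀ i, f i = F Astar i + lstar := by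
    intro i
    rcases le_or_gt Nstar i with h | h
    · rw [hconst i h, (F_eq_zero_iff Astar i).2 (fun n hn => lt_of_lt_of_le (hAlt n hn) h)]
      omega
    · exact hkey (Nstar - i) i (by omega)
  have hu_eq : u = elt Astar lstar := by
    funext i
    rw [hfu i, hall i, elt_apply]
  -- bounds
  have hld : d ≤ lstar := by
    have := hagree Nstar Nstar le_rfl
    have := hBd Nstar
    omega
  have hck : Astar.card + lstar ≤ k := by
    have h1 := hall 0
    rw [F_zero] at h1
    have h2 := hagree 0 0 le_rfl
    rw [F_zero] at h2
    have := hBk 0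
    have := hBd 0
    omega
  -- lstar ≥ d + 1
  have hd1 : d + 1 ≤ lstar := by
    by_contra hcon
    have hle : lstar = d := by omega
    have ha := hagree Nstar Nstar le_rfl
    have hLd := hBd Nstar
    have hF0 : F (B Nstar) Nstar = 0 := by omega
    have hLeq : L Nstar = lstar := by omega
    have hBlt : ∀ n ∈ B Nstar, n < Nstar := (F_eq_zero_iff _ _).1 hF0
    have hBA : B Nstar = Astar := by
      ext n
      constructor
      · intro hn
        have hnlt := hBlt n hn
        have h1 := F_step (B Nstar) n
        simp only [hn, if_true] at h1
        have h2 := hagree Nstar n (le_of_lt hnlt)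
        have h3 := hagree Nstar (n + 1) hnlt
        exact (hAmem n).2 ⟨hnlt, by omega⟩
      · intro hn
        have hnlt := hAlt n hn
        have hfn := ((hAmem n).1 hn).2
        have h1 := F_step (B Nstar) n
        have h2 := hagree Nstar n (le_of_lt hnlt)
        have h3 := hagree Nstar (n + 1) hnlt
        by_contra hnb
        simp only [hnb, if_false] at h1
        omega
    apply hBne Nstar
    rw [hBA, hLeq, ← hu_eq]
  exact ⟨Astar, lstar, hd1, hck, hu_eq⟩


lemma der_SS (k d : ℕ) : der (SS k d) = SS k (d + 1) := by
  apply Set.Subset.antisymm der_subset_succ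
  rintro u ⟨A, l, h1, h2, rfl⟩
  exact mem_der_of_mem_succ h1 h2

lemma Mk_eq (k : ℕ) : Mk k = SS k 0 := by
  ext u
  constructor
  · rintro ⟨A, l, h, rfl⟩; exact ⟨A, l, Nat.zero_le _, h, rfl⟩
  · rintro ⟨A, l, _, h, rfl⟩; exact ⟨A, l, h, rfl⟩

lemma iter_der (k d : ℕ) : der^[d] (Mk k) = SS k d := by
  induction d with
  | zero => simpa using Mk_eq k
  | succ d ih => rw [Function.iterate_succ_apply', ih, der_SS]

end CBaux

/-- For `1 ≤ d ≤ k`, the `d`-th Cantor–Bendixson derived set of `M̃_k` consists exactly of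
the elements `∑ s_{n_i} + ℓ𝟙` with `ℓ ≥ d` (and `j + ℓ ≤ k`); in particular the `(k+1)`-st
derived set is empty, so the Cantor–Bendixson index of `M̃_k` equals `k + 1`. -/
theorem cantorBendixson_Mk (k : ℕ) :
    (∀ d : ℕ, 1 ≤ d → d ≤ k →
      der^[d] (Mk k) =
        {u | ∃ (A : Finset ℕ) (l : ℕ), d ≤ l ∧ A.card + l ≤ k ∧ u = elt A l}) ∧
    der^[k + 1] (Mk k) = ∅ := by

  constructor
  · intro d _ _
    exact CBaux.iter_der k d
  · rw [CBaux.iter_der k (k + 1)]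
    rw [Set.eq_empty_iff_forall_notMem]
    rintro u ⟨A, l, h1, h2, _⟩
    omega
end
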